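/- arXiv:2207.03226 — 6 statements merged into one kernel-verified Lean document; each statement's English description precedes it below -/
import Mathlib

section
/- Let D ∈ ℕ, D ≥ 1, let X and Y be nonempty finite sets, let (P_x)_{x∈X} and (Q_y)_{y∈Y} be PVMs on ℂ^D with P_x ≠ 0 and Q_y ≠ 0 for all x ∈ X and y ∈ Y, and let (p_x)_{x∈X} and (q_y)_{y∈Y} be probability vectors. For λ, μ ∈ (0,1] define the POVMs P^λ_x := λ P_x + (1−λ) p_x I and Q^μ_y := μ Q_y + (1−μ) q_y I. Then a POVM (G_{x,y})_{(x,y)∈X×Y} on ℂ^D can be generated through broadcasting from P^λ and Q^μ if and only if, for all x ∈ X and y ∈ Y, the operator G_{x,y} − (1−μ) q_y G^{(1)}_x − (1−λ) p_x G^{(2)}_y + (1−λ)(1−μ) p_x q_y I is positive semidefinite, where G^{(1)}_x := Σ_{y'∈Y} G_{x,y'} and G^{(2)}_y := Σ_{x'∈X} G_{x',y} are the margins of G. -/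
open Kronecker Matrix
open scoped ComplexOrder

noncomputable section

/-- A linear map between matrix algebras is completely positive if it maps positive
semidefinite block matrices (with any finite number of blocks) to positive semidefinite
block matrices, blockwise. -/
def IsCPMap {m n : Type} [Fintype m] [DecidableEq m] [Fintype n] [DecidableEq n]
    (Φ : Matrix m m ℂ →ₗ[ℂ] Matrix n n ℂ) : Prop :=
  ∀ (k : ℕ) (A : Matrix (Fin k × m) (Fin k × m) ℂ), A.PosSemidef →
    (Matrix.of fun (p q : Fin k × n) =>
      Φ (Matrix.of fun a b => A (p.1, a) (q.1, b)) p.2 q.2).PosSemidef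

/-- A quantum channel: a trace-preserving completely positive linear map. -/
def IsChannel {m n : Type} [Fintype m] [DecidableEq m] [Fintype n] [DecidableEq n]
    (Φ : Matrix m m ℂ →ₗ[ℂ] Matrix n n ℂ) : Prop :=
  IsCPMap Φ ∧ ∀ ρ : Matrix m m ℂ, (Φ ρ).trace = ρ.trace

/-- A POVM with finite outcome set `X`: positive semidefinite effects summing to the identity. -/
def IsPOVM {X : Type} [Fintype X] {m : Type} [Fintype m] [DecidableEq m]
    (M : X → Matrix m m ℂ) : Prop :=
  (∀ x, (M x).PosSemidef) ∧ ∑ x, M x = 1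

/-- A PVM: a POVM all of whose effects are orthogonal projections. -/
def IsPVM {X : Type} [Fintype X] {m : Type} [Fintype m] [DecidableEq m]
    (M : X → Matrix m m ℂ) : Prop :=
  IsPOVM M ∧ ∀ x, (M x)ᴴ = M x ∧ M x * M x = M x

/-- `G` is generated through broadcasting from `M` and `N` if there is a channel `Φ`
such that `tr[Φ(ρ)(M x ⊗ N y)] = tr[ρ G x y]` for all `ρ, x, y`. -/
def GenByBroadcast {X Y : Type} [Fintype X] [Fintype Y]
    {d m n : Type} [Fintype d] [DecidableEq d] [Fintype m] [DecidableEq m]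
    [Fintype n] [DecidableEq n]
    (M : X → Matrix m m ℂ) (N : Y → Matrix n n ℂ)
    (G : X → Y → Matrix d d ℂ) : Prop :=
  ∃ Φ : Matrix d d ℂ →ₗ[ℂ] Matrix (m × n) (m × n) ℂ, IsChannel Φ ∧
    ∀ (ρ : Matrix d d ℂ) (x : X) (y : Y),
      (Φ ρ * (M x ⊗ₖ N y)).trace = (ρ * G x y).trace

/-!
Let `mix t p F x = t • F x + (1 - t) p x • ∑ F`, so that the noisy POVMs are `mix λ p P` and
`mix μ q Q`. When `∑ p = 1`, `mix t p` and `unmixNoise t p` compose, in either order, to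
multiplication by `t`, and the operator in the condition is `H`, obtained from `G` by applying
`unmixNoise λ p` in the first variable and `unmixNoise μ q` in the second.

Necessity: by linearity, `tr[ρ H x y] = λμ tr[Φ(ρ) (P x ⊗ Q y)] ≥ 0`.

Sufficiency: a nonzero effect `P a` of a PVM is detected with certainty by the state
`P a / tr (P a)`. The measure-and-prepare channel that measures the POVM `H / (λμ)` and prepares
the product of the states detecting `P a` and `Q b` therefore broadcasts the POVM obtained from
`H / (λμ)` by applying `mix λ p` and `mix μ q`, which is `G`.
-/

namespace Matrix

open scoped MatrixOrder in
theorem PosSemidef.trace_mul_nonneg {n : Type} [Fintype n] [DecidableEq n] {A B : Matrix n n ℂ}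
    (hA : A.PosSemidef) (hB : B.PosSemidef) : 0 ≤ (A * B).trace := by
  obtain ⟨C, rfl⟩ := CStarAlgebra.nonneg_iff_eq_star_mul_self.mp hB.nonneg
  rw [star_eq_conjTranspose, ← mul_assoc, trace_mul_comm]
  simpa [mul_assoc] using (hA.mul_mul_conjTranspose_same C).trace_nonneg

theorem posSemidef_of_trace_mul_nonneg {n : Type} [Fintype n] {A : Matrix n n ℂ}
    (hA : A.IsHermitian) (h : ∀ ρ : Matrix n n ℂ, ρ.PosSemidef → 0 ≤ (ρ * A).trace) :
    A.PosSemidef := by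
  refine .of_dotProduct_mulVec_nonneg hA fun v => ?_
  have := h _ (posSemidef_vecMulVec_self_star v)
  rwa [vecMulVec_mul, trace_vecMulVec, dotProduct_comm, ← dotProduct_mulVec] at this

theorem PosSemidef.trace_blocks_mul {κ d : Type} [Fintype κ] [Fintype d] [DecidableEq d]
    {A : Matrix (κ × d) (κ × d) ℂ} (hA : A.PosSemidef) {E : Matrix d d ℂ} (hE : E.PosSemidef) :
    (of fun a b : κ => ((of fun s t => A (a, s) (b, t)) * E).trace).PosSemidef := by
  refine .of_dotProduct_mulVec_nonneg ?_ fun c => ?_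
  · ext a b
    simp only [conjTranspose_apply, of_apply]
    rw [← trace_conjTranspose, conjTranspose_mul, hE.1.eq, trace_mul_comm]
    congr 2
    ext s t
    exact congrFun (congrFun hA.1.eq (a, s)) (b, t)
  · let W : Matrix (κ × d) d ℂ := of fun p t => c p.1 * (1 : Matrix d d ℂ) p.2 t
    have hW : star c ⬝ᵥ (of fun a b : κ => ((of fun s t => A (a, s) (b, t)) * E).trace) *ᵥ c =
        (Wᴴ * A * W * E).trace := by
      simp only [W, dotProduct, Pi.star_apply, RCLike.star_def, mulVec, trace, diag_apply,
        mul_apply, of_apply, Finset.sum_mul, Finset.mul_sum, one_apply, apply_ite, mul_one,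
        mul_zero, conjTranspose_apply, star_zero, ite_mul, zero_mul, Fintype.sum_prod_type,
        Finset.sum_ite_eq', Finset.mem_univ, ↓reduceIte]
      simp_rw [Finset.sum_comm (γ := κ) (α := d)]
      conv_rhs => enter [2, s, 2, t]; rw [Finset.sum_comm]
      refine Finset.sum_congr rfl fun s _ => Finset.sum_congr rfl fun t _ =>
        Finset.sum_congr rfl fun a _ => Finset.sum_congr rfl fun b _ => by ring
    rw [hW]
    exact (hA.conjTranspose_mul_mul_same W).trace_mul_nonneg hE

theorem sum_kronecker {l m n p ι α : Type*} [NonUnitalNonAssocSemiring α] (s : Finset ι)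
    (A : ι → Matrix l m α) (B : Matrix n p α) : (∑ i ∈ s, A i) ⊗ₖ B = ∑ i ∈ s, A i ⊗ₖ B := by
  ext; simp [sum_apply, Finset.sum_mul]

theorem kronecker_sum {l m n p ι α : Type*} [NonUnitalNonAssocSemiring α] (s : Finset ι)
    (A : Matrix l m α) (B : ι → Matrix n p α) : A ⊗ₖ (∑ i ∈ s, B i) = ∑ i ∈ s, A ⊗ₖ B i := by
  ext; simp [sum_apply, Finset.mul_sum]

end Matrix

section Noise

variable {X V : Type*} [Fintype X] [AddCommGroup V] [Module ℝ V]

def unmixNoise (t : ℝ) (p : X → ℝ) (F : X → V) (x : X) : V :=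
  F x - ((1 - t) * p x) • ∑ a, F a

theorem unmixNoise_eq_sum [DecidableEq X] (t : ℝ) (p : X → ℝ) (F : X → V) (x : X) :
    unmixNoise t p F x = ∑ a, ((if a = x then 1 else 0) - (1 - t) * p x) • F a := by
  simp [unmixNoise, sub_smul, Finset.sum_sub_distrib, Finset.smul_sum]

theorem unmixNoise_mix {t : ℝ} {p : X → ℝ} (hp : ∑ a, p a = 1) {F : X → V} {v : V}
    (hF : ∑ a, F a = v) : unmixNoise t p (fun a => t • F a + ((1 - t) * p a) • v) = t • F := by
  ext x
  simp only [unmixNoise, Finset.sum_add_distrib, ← Finset.smul_sum, ← Finset.sum_smul,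
    ← Finset.mul_sum, hp, hF, Pi.smul_apply]
  module

theorem sum_unmixNoise {t : ℝ} {p : X → ℝ} (hp : ∑ a, p a = 1) (F : X → V) :
    ∑ x, unmixNoise t p F x = t • ∑ x, F x := by
  simp only [unmixNoise, Finset.sum_sub_distrib, ← Finset.sum_smul, ← Finset.mul_sum, hp]
  module

theorem sum_mix_smul_unmixNoise [DecidableEq X] {t : ℝ} {p : X → ℝ} (hp : ∑ a, p a = 1)
    (F : X → V) (x : X) :
    ∑ a, ((if a = x then t else 0) + (1 - t) * p x) • unmixNoise t p F a = t • F x := by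
  simp only [unmixNoise, add_smul, ite_smul, zero_smul, Finset.sum_add_distrib,
    Finset.sum_ite_eq', Finset.mem_univ, if_true, ← Finset.smul_sum, Finset.sum_sub_distrib,
    ← Finset.sum_smul, ← Finset.mul_sum, hp]
  module

theorem unmixNoise_unmixNoise {Y : Type*} [Fintype Y] (l μ : ℝ) (p : X → ℝ) (q : Y → ℝ)
    (G : X → Y → V) (x : X) (y : Y) :
    unmixNoise l p (fun a => unmixNoise μ q (G a) y) x =
      G x y - ((1 - μ) * q y) • ∑ y', G x y' - ((1 - l) * p x) • ∑ x', G x' y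
        + ((1 - l) * (1 - μ) * p x * q y) • ∑ x', ∑ y', G x' y' := by
  simp only [unmixNoise, Finset.sum_sub_distrib, ← Finset.smul_sum]
  module

theorem sum_sum_unmixNoise_unmixNoise {Y : Type*} [Fintype Y] {l μ : ℝ} {p : X → ℝ}
    {q : Y → ℝ} (hp : ∑ a, p a = 1) (hq : ∑ b, q b = 1) (G : X → Y → V) :
    ∑ a, ∑ b, unmixNoise l p (fun a' => unmixNoise μ q (G a') b) a =
      (l * μ) • ∑ a, ∑ b, G a b := by
  rw [Finset.sum_comm]
  simp only [sum_unmixNoise hp]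
  rw [← Finset.smul_sum, Finset.sum_comm]
  simp only [sum_unmixNoise hq, ← Finset.smul_sum, mul_smul]

theorem sum_mix_smul_sum_mix_smul_unmixNoise_unmixNoise [DecidableEq X] {Y : Type*} [Fintype Y]
    [DecidableEq Y] {l μ : ℝ} {p : X → ℝ} {q : Y → ℝ} (hp : ∑ a, p a = 1) (hq : ∑ b, q b = 1)
    (G : X → Y → V) (x : X) (y : Y) :
    ∑ a, ∑ b, (((if a = x then l else 0) + (1 - l) * p x) *
        ((if b = y then μ else 0) + (1 - μ) * q y)) •
      unmixNoise l p (fun a' => unmixNoise μ q (G a') b) a = (l * μ) • G x y := by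
  simp only [mul_comm ((if _ = x then l else 0) + _), mul_smul]
  rw [Finset.sum_comm]
  simp only [← Finset.smul_sum, sum_mix_smul_unmixNoise hp]
  rw [← sum_mix_smul_unmixNoise hq, Finset.smul_sum]
  simp only [smul_comm l]

end Noise

section Measurements

variable {X n : Type} [Fintype X] [DecidableEq X] [Fintype n] [DecidableEq n]

theorem IsPOVM.trace_mul_eq_ite {M : X → Matrix n n ℂ} (hM : IsPOVM M) {σ : Matrix n n ℂ}
    (hσ : σ.PosSemidef) (hσ_trace : σ.trace = 1) {x : X} (hx : (σ * M x).trace = 1) (x' : X) :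
    (σ * M x').trace = if x = x' then 1 else 0 := by
  split_ifs with h
  · exact h ▸ hx
  have hsum : ∑ z, (σ * M z).trace = 1 := by
    rw [← Matrix.trace_sum, ← Matrix.mul_sum, hM.2, mul_one, hσ_trace]
  rw [← Finset.add_sum_erase _ _ (Finset.mem_univ x), hx, add_eq_left] at hsum
  exact (Finset.sum_eq_zero_iff_of_nonneg fun z _ => hσ.trace_mul_nonneg (hM.1 z)).mp hsum x'
    (Finset.mem_erase.mpr ⟨Ne.symm h, Finset.mem_univ _⟩)

theorem IsPVM.exists_state_trace_mul_eq_ite {P : X → Matrix n n ℂ} (hP : IsPVM P) {x : X}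
    (hx : P x ≠ 0) : ∃ σ : Matrix n n ℂ, σ.PosSemidef ∧ σ.trace = 1 ∧
      ∀ x', (σ * P x').trace = if x = x' then 1 else 0 := by
  have htr : 0 < (P x).trace :=
    (hP.1.1 x).trace_nonneg.lt_of_ne' (mt (hP.1.1 x).trace_eq_zero_iff.mp hx)
  have hσ_trace : ((P x).trace⁻¹ • P x).trace = 1 := by
    rw [Matrix.trace_smul, smul_eq_mul, inv_mul_cancel₀ htr.ne']
  refine ⟨(P x).trace⁻¹ • P x, (hP.1.1 x).smul (RCLike.inv_pos.mpr htr).le, hσ_trace,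
    hP.1.trace_mul_eq_ite ((hP.1.1 x).smul (RCLike.inv_pos.mpr htr).le) hσ_trace ?_⟩
  rwa [smul_mul_assoc, (hP.2 x).2]

theorem IsPVM.exists_state_trace_mul_mix {P : X → Matrix n n ℂ} (hP : IsPVM P) {x : X}
    (hx : P x ≠ 0) (t : ℝ) (p : X → ℝ) : ∃ σ : Matrix n n ℂ, σ.PosSemidef ∧ σ.trace = 1 ∧
      ∀ x', (σ * (t • P x' + ((1 - t) * p x' : ℝ) • 1)).trace =
        (((if x = x' then t else 0) + (1 - t) * p x' : ℝ) : ℂ) := by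
  obtain ⟨σ, hσ, hσ_trace, hσP⟩ := hP.exists_state_trace_mul_eq_ite hx
  refine ⟨σ, hσ, hσ_trace, fun x' => ?_⟩
  simp [mul_add, Matrix.trace_add, hσP, hσ_trace, apply_ite]

end Measurements

section Channels

variable {d n ι : Type} [Fintype d] [Fintype ι]

def measurePrepare (E : ι → Matrix d d ℂ) (S : ι → Matrix n n ℂ) :
    Matrix d d ℂ →ₗ[ℂ] Matrix n n ℂ :=
  ∑ i, ((Matrix.traceLinearMap d ℂ ℂ).comp (LinearMap.mulRight ℂ (E i))).smulRight (S i)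

@[simp]
theorem measurePrepare_apply (E : ι → Matrix d d ℂ) (S : ι → Matrix n n ℂ) (ρ : Matrix d d ℂ) :
    measurePrepare E S ρ = ∑ i, (ρ * E i).trace • S i := by
  simp [measurePrepare]

variable [DecidableEq d] [Fintype n] [DecidableEq n]

theorem IsCPMap.posSemidef_apply {Φ : Matrix d d ℂ →ₗ[ℂ] Matrix n n ℂ} (hΦ : IsCPMap Φ)
    {ρ : Matrix d d ℂ} (hρ : ρ.PosSemidef) : (Φ ρ).PosSemidef :=
  (hΦ 1 _ (hρ.submatrix Prod.snd)).submatrix fun a => ((0 : Fin 1), a)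

theorem trace_measurePrepare_mul (E : ι → Matrix d d ℂ) (S : ι → Matrix n n ℂ)
    (ρ : Matrix d d ℂ) (K : Matrix n n ℂ) :
    (measurePrepare E S ρ * K).trace = (ρ * ∑ i, (S i * K).trace • E i).trace := by
  simp [Finset.sum_mul, Finset.mul_sum, Matrix.trace_sum, mul_comm]

theorem isCPMap_measurePrepare {E : ι → Matrix d d ℂ} {S : ι → Matrix n n ℂ}
    (hE : ∀ i, (E i).PosSemidef) (hS : ∀ i, (S i).PosSemidef) :
    IsCPMap (measurePrepare E S) := by
  intro k A hA
  have hblocks : (Matrix.of fun p q : Fin k × n =>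
      measurePrepare E S (Matrix.of fun a b => A (p.1, a) (q.1, b)) p.2 q.2) =
      ∑ i, (Matrix.of fun a b : Fin k =>
        ((Matrix.of fun s t => A (a, s) (b, t)) * E i).trace) ⊗ₖ S i := by
    ext p q
    simp [Matrix.sum_apply, Matrix.kroneckerMap_apply]
  rw [hblocks]
  exact Matrix.posSemidef_sum _ fun i _ => (hA.trace_blocks_mul (hE i)).kronecker (hS i)

theorem isChannel_measurePrepare {E : ι → Matrix d d ℂ} {S : ι → Matrix n n ℂ}
    (hE : ∀ i, (E i).PosSemidef) (hE_sum : ∑ i, E i = 1)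
    (hS : ∀ i, (S i).PosSemidef) (hS_trace : ∀ i, (S i).trace = 1) :
    IsChannel (measurePrepare E S) := by
  refine ⟨isCPMap_measurePrepare hE hS, fun ρ => ?_⟩
  simpa [hS_trace, Matrix.trace_sum, ← Matrix.mul_sum, hE_sum] using
    trace_measurePrepare_mul E S ρ 1

theorem genByBroadcast_of_eq_sum_smul {X Y m : Type} [Fintype X] [Fintype Y] [Fintype m]
    [DecidableEq m]
    {M : X → Matrix n n ℂ} {N : Y → Matrix m m ℂ} {G : X → Y → Matrix d d ℂ}
    {E : ι → Matrix d d ℂ} {S : ι → Matrix (n × m) (n × m) ℂ}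
    (hE : ∀ i, (E i).PosSemidef) (hE_sum : ∑ i, E i = 1)
    (hS : ∀ i, (S i).PosSemidef) (hS_trace : ∀ i, (S i).trace = 1)
    (hG : ∀ x y, G x y = ∑ i, (S i * (M x ⊗ₖ N y)).trace • E i) :
    GenByBroadcast M N G :=
  ⟨measurePrepare E S, isChannel_measurePrepare hE hE_sum hS hS_trace, fun ρ x y => by
    rw [trace_measurePrepare_mul, hG]⟩

theorem GenByBroadcast.posSemidef_sum_smul_sum_smul {X Y m : Type} [Fintype X] [Fintype Y]
    [Fintype m] [DecidableEq m]
    {M : X → Matrix n n ℂ} {N : Y → Matrix m m ℂ} {G : X → Y → Matrix d d ℂ}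
    (h : GenByBroadcast M N G) (hG : ∀ x y, (G x y).IsHermitian) (a : X → ℝ) (b : Y → ℝ)
    (hK : ((∑ x, a x • M x) ⊗ₖ (∑ y, b y • N y)).PosSemidef) :
    (∑ x, a x • ∑ y, b y • G x y).PosSemidef := by
  obtain ⟨Φ, ⟨hΦ, -⟩, hΦG⟩ := h
  refine Matrix.posSemidef_of_trace_mul_nonneg ?_ fun ρ hρ => ?_
  · exact isSelfAdjoint_sum _ fun x _ =>
      .smul (.all _) (isSelfAdjoint_sum _ fun y _ => .smul (.all _) (hG x y))
  · have : (ρ * ∑ x, a x • ∑ y, b y • G x y).trace =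
        (Φ ρ * ((∑ x, a x • M x) ⊗ₖ (∑ y, b y • N y))).trace := by
      rw [Matrix.sum_kronecker]
      simp [Matrix.kronecker_sum, Matrix.smul_kronecker, Matrix.kronecker_smul,
        Finset.mul_sum, Matrix.trace_sum, hΦG, mul_left_comm]
    rw [this]
    exact (hΦ.posSemidef_apply hρ).trace_mul_nonneg hK

end Channels

theorem statement2_general (D : ℕ) (X Y : Type) [Fintype X] [Fintype Y]
    (P : X → Matrix (Fin D) (Fin D) ℂ) (Q : Y → Matrix (Fin D) (Fin D) ℂ)
    (hP : IsPVM P) (hQ : IsPVM Q)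
    (hPne : ∀ x, P x ≠ 0) (hQne : ∀ y, Q y ≠ 0)
    (p : X → ℝ) (q : Y → ℝ)
    (hp1 : ∑ x, p x = 1) (hq1 : ∑ y, q y = 1)
    (l μ : ℝ) (hl : l ∈ Set.Ioc (0 : ℝ) 1) (hμ : μ ∈ Set.Ioc (0 : ℝ) 1)
    (G : X → Y → Matrix (Fin D) (Fin D) ℂ)
    (hG : IsPOVM fun pr : X × Y => G pr.1 pr.2) :
    GenByBroadcast (fun x => l • P x + ((1 - l) * p x : ℝ) • (1 : Matrix (Fin D) (Fin D) ℂ))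
      (fun y => μ • Q y + ((1 - μ) * q y : ℝ) • (1 : Matrix (Fin D) (Fin D) ℂ)) G ↔
    ∀ (x : X) (y : Y),
      (G x y - ((1 - μ) * q y : ℝ) • (∑ y', G x y')
        - ((1 - l) * p x : ℝ) • (∑ x', G x' y)
        + ((1 - l) * (1 - μ) * p x * q y : ℝ) • (1 : Matrix (Fin D) (Fin D) ℂ)).PosSemidef := by
  classical
  have hG_sum : ∑ x, ∑ y, G x y = 1 := by simpa [Fintype.sum_prod_type] using hG.2
  have hH : ∀ x y, G x y - ((1 - μ) * q y : ℝ) • (∑ y', G x y')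
      - ((1 - l) * p x : ℝ) • (∑ x', G x' y)
      + ((1 - l) * (1 - μ) * p x * q y : ℝ) • (1 : Matrix (Fin D) (Fin D) ℂ) =
      unmixNoise l p (fun a => unmixNoise μ q (G a) y) x := fun x y => by
    rw [unmixNoise_unmixNoise, hG_sum]
  simp only [hH]
  have hlμ : 0 < l * μ := mul_pos hl.1 hμ.1
  constructor
  · intro h x y
    simp only [unmixNoise_eq_sum]
    refine h.posSemidef_sum_smul_sum_smul (fun x y => (hG.1 (x, y)).1) _ _ ?_
    rw [← unmixNoise_eq_sum, ← unmixNoise_eq_sum, unmixNoise_mix hp1 hP.1.2,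
      unmixNoise_mix hq1 hQ.1.2]
    exact ((hP.1.1 x).smul hl.1.le).kronecker ((hQ.1.1 y).smul hμ.1.le)
  · intro hH_psd
    choose σ hσ hσ_trace hσM using fun x => hP.exists_state_trace_mul_mix (hPne x) l p
    choose τ hτ hτ_trace hτN using fun y => hQ.exists_state_trace_mul_mix (hQne y) μ q
    refine genByBroadcast_of_eq_sum_smul (S := fun i => σ i.1 ⊗ₖ τ i.2)
      (E := fun i : X × Y => ((l * μ)⁻¹ : ℝ) • unmixNoise l p (fun a => unmixNoise μ q (G a) i.2) i.1)
      (fun i => (hH_psd i.1 i.2).smul (α := ℝ) (inv_pos.mpr hlμ).le) ?_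
      (fun i => (hσ i.1).kronecker (hτ i.2))
      (fun i => by rw [Matrix.trace_kronecker, hσ_trace, hτ_trace, mul_one]) fun x y => ?_
    · simp only [Fintype.sum_prod_type, ← Finset.smul_sum]
      rw [sum_sum_unmixNoise_unmixNoise hp1 hq1, hG_sum, inv_smul_smul₀ hlμ.ne']
    · simp only [Fintype.sum_prod_type, ← Matrix.mul_kronecker_mul, Matrix.trace_kronecker, hσM,
        hτN, ← Complex.ofReal_mul, Complex.coe_smul, smul_comm _ (l * μ)⁻¹, ← Finset.smul_sum,
        sum_mix_smul_sum_mix_smul_unmixNoise_unmixNoise hp1 hq1, inv_smul_smul₀ hlμ.ne']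

/-- Corollary `cor:fuzzyPVM`: for PVMs `P`, `Q` with nonvanishing
effects mixed with white/coloured noise, a POVM `G` can be generated through broadcasting
from the noisy POVMs if and only if the marginal positivity condition holds. -/
theorem statement2 (D : ℕ) (hD : 1 ≤ D) (X Y : Type) [Fintype X] [Nonempty X]
    [Fintype Y] [Nonempty Y]
    (P : X → Matrix (Fin D) (Fin D) ℂ) (Q : Y → Matrix (Fin D) (Fin D) ℂ)
    (hP : IsPVM P) (hQ : IsPVM Q)
    (hPne : ∀ x, P x ≠ 0) (hQne : ∀ y, Q y ≠ 0)
    (p : X → ℝ) (q : Y → ℝ)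
    (hp0 : ∀ x, 0 ≤ p x) (hp1 : ∑ x, p x = 1)
    (hq0 : ∀ y, 0 ≤ q y) (hq1 : ∑ y, q y = 1)
    (l μ : ℝ) (hl : l ∈ Set.Ioc (0 : ℝ) 1) (hμ : μ ∈ Set.Ioc (0 : ℝ) 1)
    (G : X → Y → Matrix (Fin D) (Fin D) ℂ)
    (hG : IsPOVM fun pr : X × Y => G pr.1 pr.2) :
    GenByBroadcast (fun x => l • P x + ((1 - l) * p x : ℝ) • (1 : Matrix (Fin D) (Fin D) ℂ))
      (fun y => μ • Q y + ((1 - μ) * q y : ℝ) • (1 : Matrix (Fin D) (Fin D) ℂ)) G ↔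
    ∀ (x : X) (y : Y),
      (G x y - ((1 - μ) * q y : ℝ) • (∑ y', G x y')
        - ((1 - l) * p x : ℝ) • (∑ x', G x' y)
        + ((1 - l) * (1 - μ) * p x * q y : ℝ) • (1 : Matrix (Fin D) (Fin D) ℂ)).PosSemidef :=
  statement2_general D X Y P Q hP hQ hPne hQne p q hp1 hq1 l μ hl hμ G hG
end
end

section
/- Fix D ∈ ℕ, D ≥ 1, and let σ be a state on ℂ^D (positive semidefinite with trace 1). Define U := Σ_{k∈ℤ_D} U_k ⊗ |φ_k⟩⟨φ_k| on ℂ^D ⊗ ℂ^D, the parity unitary 𝒫 by 𝒫φ_m = φ_{−m}, the transpose σᵀ with respect to the basis (φ_m), and the map Φ(ρ) := U (𝒫σᵀ𝒫 ⊗ ρ) U* for D×D matrices ρ. Then Φ is a channel (trace-preserving and completely positive) and for all m, n ∈ ℤ_D and all D×D matrices ρ: tr[Φ(ρ) (|φ_m⟩⟨φ_m| ⊗ |ψ_n⟩⟨ψ_n|)] = tr[ρ G^σ_{m,n}], i.e., Φ generates the covariant phase-space POVM G^σ through broadcasting from the finite position PVM (|φ_m⟩⟨φ_m|)_{m∈ℤ_D}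 and momentum PVM (|ψ_n⟩⟨ψ_n|)_{n∈ℤ_D}. -/
/-! The controlled shift `U = ∑ₖ U_k ⊗ |φ_k⟩⟨φ_k|` is the permutation matrix of the shear
`(a, b) ↦ (a - b, b)`, so `Φ(ρ)` is `τ ⊗ ρ` reindexed, with `τ = 𝒫σᵀ𝒫` a state. Hence `Φ` is
the channel `ρ ↦ τ ⊗ ρ` followed by a unitary conjugation. Reading off position `m` in the
first factor leaves the block `(b, c) ↦ σ (c - m) (b - m) ρ b c`, and `|ψ_n⟩⟨ψ_n|` has entries
`⟨b - c, n⟩ / D`. Its trace against that block is `tr[ρ G^σ_{m,n}]`, because `W_{m,n} σ W_{m,n}^*`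
has entries `⟨a - b, n⟩ σ (a - m) (b - m)`: the Weyl phase cancels and the phases of `V_n`
combine since `⟨·, n⟩` is a character. -/

open Kronecker Matrix
open scoped ComplexOrder

noncomputable section

/-- `⟨m,n⟩ := e^{2πi m n / D}` for `m, n ∈ ℤ_D`. -/
def chr (D : ℕ) (m n : ZMod D) : ℂ :=
  Complex.exp (2 * Real.pi * Complex.I * m.val * n.val / D)

/-- The standard (position) basis vector `φ_m` of `ℂ^D`. -/
def ketphi (D : ℕ) (m : ZMod D) : ZMod D → ℂ :=
  fun m' => if m' = m then 1 else 0

/-- The momentum basis vector `ψ_n := D^{−1/2} Σ_m ⟨m,n⟩ φ_m` of `ℂ^D`. -/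
def ketpsi (D : ℕ) (n : ZMod D) : ZMod D → ℂ :=
  fun m => chr D m n / Real.sqrt D

/-- The rank-one operator `|u⟩⟨v|`. -/
def outer {d : Type} (u v : d → ℂ) : Matrix d d ℂ :=
  Matrix.vecMulVec u (star v)

/-- The shift unitary `U_k`, `U_k φ_m = φ_{m+k}`. -/
def shiftU (D : ℕ) (k : ZMod D) : Matrix (ZMod D) (ZMod D) ℂ :=
  Matrix.of fun m m' => if m = m' + k then 1 else 0

/-- The phase unitary `V_ℓ`, `V_ℓ φ_m = ⟨m,ℓ⟩ φ_m`. -/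
def phaseV (D : ℕ) (l : ZMod D) : Matrix (ZMod D) (ZMod D) ℂ :=
  Matrix.diagonal fun m => chr D m l

/-- The Weyl operator `W_{k,ℓ} := e^{iπ k̃ ℓ̃ / D} U_k V_ℓ`. -/
def weylW (D : ℕ) [NeZero D] (k l : ZMod D) : Matrix (ZMod D) (ZMod D) ℂ :=
  Complex.exp (Real.pi * Complex.I * k.val * l.val / D) • (shiftU D k * phaseV D l)

/-- The covariant phase-space POVM `G^σ_{m,n} := (1/D) W_{m,n} σ W_{m,n}^*`. -/
def Gcov (D : ℕ) [NeZero D] (σ : Matrix (ZMod D) (ZMod D) ℂ) (m n : ZMod D) :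
    Matrix (ZMod D) (ZMod D) ℂ :=
  ((D : ℂ))⁻¹ • (weylW D m n * σ * (weylW D m n)ᴴ)

/-- The parity unitary `𝒫`, `𝒫 φ_m = φ_{−m}`. -/
def parityP (D : ℕ) : Matrix (ZMod D) (ZMod D) ℂ :=
  Matrix.of fun m m' => if m = -m' then 1 else 0

/-- `σ^Q := Σ_m ⟨φ_m, σ φ_m⟩ |φ_m⟩⟨φ_m|`, the position-diagonal part of `σ`. -/
def sigmaQ (D : ℕ) [NeZero D] (σ : Matrix (ZMod D) (ZMod D) ℂ) :
    Matrix (ZMod D) (ZMod D) ℂ :=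
  ∑ m, (star (ketphi D m) ⬝ᵥ σ.mulVec (ketphi D m)) • outer (ketphi D m) (ketphi D m)

/-- `σ^P := Σ_n ⟨ψ_n, σ ψ_n⟩ |ψ_n⟩⟨ψ_n|`, the momentum-diagonal part of `σ`. -/
def sigmaP (D : ℕ) [NeZero D] (σ : Matrix (ZMod D) (ZMod D) ℂ) :
    Matrix (ZMod D) (ZMod D) ℂ :=
  ∑ n, (star (ketpsi D n) ⬝ᵥ σ.mulVec (ketpsi D n)) • outer (ketpsi D n) (ketpsi D n)

section CompletelyPositive

variable {l m n : Type} [Fintype l] [DecidableEq l] [Fintype m] [DecidableEq m]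
  [Fintype n] [DecidableEq n]

theorem IsCPMap.comp {Φ : Matrix m m ℂ →ₗ[ℂ] Matrix n n ℂ} {Ψ : Matrix l l ℂ →ₗ[ℂ] Matrix m m ℂ}
    (hΦ : IsCPMap Φ) (hΨ : IsCPMap Ψ) : IsCPMap (Φ ∘ₗ Ψ) :=
  fun k A hA => hΦ k _ (hΨ k A hA)

@[simps]
def conjLinearMap (A : Matrix n m ℂ) : Matrix m m ℂ →ₗ[ℂ] Matrix n n ℂ where
  toFun ρ := A * ρ * Aᴴ
  map_add' ρ ρ' := by rw [Matrix.mul_add, Matrix.add_mul]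
  map_smul' c ρ := by rw [Matrix.mul_smul, Matrix.smul_mul, RingHom.id_apply]

theorem isCPMap_conjLinearMap (A : Matrix n m ℂ) : IsCPMap (conjLinearMap A) := by
  intro k X hX
  convert hX.mul_mul_conjTranspose_same ((1 : Matrix (Fin k) (Fin k) ℂ) ⊗ₖ A) using 1
  ext p q
  simp [mul_apply, Fintype.sum_prod_type, one_apply, Finset.sum_mul, apply_ite (starRingEnd ℂ)]

theorem isCPMap_kronecker_left {τ : Matrix l l ℂ} (hτ : τ.PosSemidef) :
    IsCPMap (kroneckerBilinear (R := ℂ) τ : Matrix m m ℂ →ₗ[ℂ] Matrix (l × m) (l × m) ℂ) := by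
  intro k X hX
  -- the blockwise image of `X` is `τ ⊗ₖ X` with its index factors permuted
  exact (hτ.kronecker hX).submatrix fun p : Fin k × l × m => (p.2.1, p.1, p.2.2)

theorem isChannel_conjLinearMap_comp_kronecker {τ : Matrix l l ℂ} (hτ : τ.PosSemidef)
    (hτtr : τ.trace = 1) {U : Matrix n (l × m) ℂ} (hU : Uᴴ * U = 1) :
    IsChannel (conjLinearMap U ∘ₗ (kroneckerBilinear (R := ℂ) τ :
      Matrix m m ℂ →ₗ[ℂ] Matrix (l × m) (l × m) ℂ)) := by
  refine ⟨(isCPMap_conjLinearMap U).comp (isCPMap_kronecker_left hτ), fun ρ => ?_⟩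
  change (U * (τ ⊗ₖ ρ) * Uᴴ).trace = ρ.trace
  rw [trace_mul_comm, ← Matrix.mul_assoc, hU, Matrix.one_mul, trace_kronecker, hτtr, one_mul]

end CompletelyPositive

section Reindex

variable {α : Type} [Semiring α] [StarRing α] {m n : Type} [DecidableEq m] [DecidableEq n]

theorem conjTranspose_toMatrix_toPEquiv (e : m ≃ n) :
    (e.toPEquiv.toMatrix : Matrix m n α)ᴴ = e.symm.toPEquiv.toMatrix := by
  ext i j
  simp [conjTranspose_apply, PEquiv.toMatrix_apply, apply_ite (star : α → α),
    Equiv.eq_symm_apply, eq_comm]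

theorem conjTranspose_toMatrix_toPEquiv_mul_self [Fintype m] (e : m ≃ n) :
    (e.toPEquiv.toMatrix : Matrix m n α)ᴴ * (e.toPEquiv.toMatrix : Matrix m n α) = 1 := by
  rw [conjTranspose_toMatrix_toPEquiv, ← PEquiv.toMatrix_trans, ← Equiv.toPEquiv_trans,
    Equiv.symm_trans_self, Equiv.toPEquiv_refl, PEquiv.toMatrix_refl]

theorem toMatrix_toPEquiv_mul_mul_conjTranspose [Fintype n] (e : m ≃ n) (X : Matrix n n α) :
    (e.toPEquiv.toMatrix : Matrix m n α) * X * (e.toPEquiv.toMatrix : Matrix m n α)ᴴ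
      = X.submatrix e e := by
  rw [conjTranspose_toMatrix_toPEquiv, PEquiv.toMatrix_toPEquiv_mul,
    PEquiv.mul_toMatrix_toPEquiv, Equiv.symm_symm, submatrix_submatrix]
  rfl

end Reindex

theorem trace_submatrix_equiv {α m n : Type} [AddCommMonoid α] [Fintype m] [Fintype n]
    (e : m ≃ n) (X : Matrix n n α) : (X.submatrix e e).trace = X.trace :=
  e.sum_comp fun i => X i i

theorem trace_mul_single_kronecker {α ι κ : Type} [CommSemiring α] [Fintype ι] [DecidableEq ι]
    [Fintype κ] (X : Matrix (ι × κ) (ι × κ) α) (i : ι) (Q : Matrix κ κ α) :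
    (X * (single i i 1 ⊗ₖ Q)).trace = (X.submatrix (Prod.mk i) (Prod.mk i) * Q).trace := by
  simp [Matrix.trace, mul_apply, Fintype.sum_prod_type, single_apply, ite_and]

theorem smul_mul_mul_conjTranspose_smul {m n : Type} [Fintype m] {c : ℂ} (hc : ‖c‖ = 1)
    (A : Matrix n m ℂ) (X : Matrix m m ℂ) : (c • A) * X * (c • A)ᴴ = A * X * Aᴴ := by
  rw [conjTranspose_smul, Matrix.smul_mul, Matrix.mul_smul, Matrix.smul_mul, smul_smul,
    Complex.star_def, Complex.conj_mul', hc, Complex.ofReal_one, one_pow, one_smul]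

def subSndEquiv (G : Type) [AddGroup G] : G × G ≃ G × G where
  toFun p := (p.1 - p.2, p.2)
  invFun p := (p.1 + p.2, p.2)
  left_inv p := by simp
  right_inv p := by simp

section Weyl

variable (D : ℕ)

theorem shiftU_eq_toMatrix (k : ZMod D) :
    shiftU D k = (Equiv.subRight k).toPEquiv.toMatrix := by
  ext a b
  simp [shiftU, PEquiv.toMatrix_apply, eq_sub_iff_add_eq, eq_comm]

theorem parityP_eq_toMatrix : parityP D = (Equiv.neg (ZMod D)).toPEquiv.toMatrix := by
  ext a b
  simp [parityP, PEquiv.toMatrix_apply, eq_neg_iff_add_eq_zero, neg_eq_iff_add_eq_zero]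

theorem outer_ketphi (k : ZMod D) : outer (ketphi D k) (ketphi D k) = single k k 1 := by
  ext a b
  simp only [outer, ketphi, vecMulVec_apply, Pi.star_apply, single_apply,
    apply_ite (star : ℂ → ℂ), star_one, star_zero, mul_ite, mul_one, mul_zero]
  grind

variable [NeZero D]

theorem sum_shiftU_kronecker_outer_ketphi :
    ∑ k : ZMod D, shiftU D k ⊗ₖ outer (ketphi D k) (ketphi D k)
      = (subSndEquiv (ZMod D)).toPEquiv.toMatrix := by
  ext i j
  simp [Matrix.sum_apply, shiftU_eq_toMatrix, outer_ketphi, single_apply, subSndEquiv,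
    Prod.ext_iff, ite_and, Finset.sum_ite_eq']
  grind

theorem parityP_mul_mul_parityP (X : Matrix (ZMod D) (ZMod D) ℂ) :
    parityP D * X * parityP D = X.submatrix (Equiv.neg _) (Equiv.neg _) := by
  rw [parityP_eq_toMatrix, PEquiv.toMatrix_toPEquiv_mul, PEquiv.mul_toMatrix_toPEquiv,
    submatrix_submatrix]
  rfl

theorem chr_eq_toCircle (a n : ZMod D) : chr D a n = ZMod.toCircle (a * n) := by
  rw [show a * n = ((a.val * n.val : ℕ) : ZMod D) by simp, ZMod.toCircle_natCast, chr]
  push_cast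
  ring_nf

theorem chr_sub (a b n : ZMod D) : chr D (a - b) n = chr D a n * star (chr D b n) := by
  rw [chr_eq_toCircle, chr_eq_toCircle, chr_eq_toCircle, sub_mul, AddChar.map_sub_eq_div,
    div_eq_mul_inv, Circle.coe_mul, Circle.coe_inv_eq_conj]
  rfl

theorem outer_ketpsi_apply (n a b : ZMod D) :
    outer (ketpsi D n) (ketpsi D n) a b = (D : ℂ)⁻¹ * chr D (a - b) n := by
  have hD : ((Real.sqrt D : ℝ) : ℂ) * (Real.sqrt D : ℝ) = D := by
    rw [← Complex.ofReal_mul, Real.mul_self_sqrt (Nat.cast_nonneg D), Complex.ofReal_natCast]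
  simp only [outer, ketpsi, vecMulVec_apply, Pi.star_apply, star_div₀, Complex.star_def,
    Complex.conj_ofReal, div_mul_div_comm, hD, chr_sub]
  ring

theorem weylW_mul_mul_conjTranspose (m n : ZMod D) (σ : Matrix (ZMod D) (ZMod D) ℂ) :
    weylW D m n * σ * (weylW D m n)ᴴ
      = (phaseV D n * σ * (phaseV D n)ᴴ).submatrix (Equiv.subRight m) (Equiv.subRight m) := by
  have hphase : ‖Complex.exp (Real.pi * Complex.I * m.val * n.val / D)‖ = 1 := by
    rw [show (Real.pi * Complex.I * m.val * n.val / D : ℂ)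
        = ((Real.pi * m.val * n.val / D : ℝ) : ℂ) * Complex.I by push_cast; ring]
    exact Complex.norm_exp_ofReal_mul_I _
  rw [weylW, smul_mul_mul_conjTranspose_smul hphase, conjTranspose_mul, shiftU_eq_toMatrix,
    ← toMatrix_toPEquiv_mul_mul_conjTranspose]
  simp only [Matrix.mul_assoc]

theorem Gcov_apply (σ : Matrix (ZMod D) (ZMod D) ℂ) (m n a b : ZMod D) :
    Gcov D σ m n a b = (D : ℂ)⁻¹ * (chr D (a - b) n * σ (a - m) (b - m)) := by
  rw [Gcov, Matrix.smul_apply, weylW_mul_mul_conjTranspose, submatrix_apply, phaseV,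
    diagonal_conjTranspose, mul_diagonal, diagonal_mul, Equiv.subRight_apply,
    Equiv.subRight_apply, ← sub_sub_sub_cancel_right a b m, chr_sub D (a - m) (b - m),
    smul_eq_mul]
  simp only [Pi.star_apply]
  ring

theorem trace_submatrix_kronecker_mul_eq_trace_mul_Gcov (σ ρ : Matrix (ZMod D) (ZMod D) ℂ)
    (m n : ZMod D) :
    ((σᵀ.submatrix (Equiv.neg _) (Equiv.neg _) ⊗ₖ ρ).submatrix (subSndEquiv (ZMod D))
        (subSndEquiv (ZMod D)) * (single m m 1 ⊗ₖ outer (ketpsi D n) (ketpsi D n))).trace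
      = (ρ * Gcov D σ m n).trace := by
  rw [trace_mul_single_kronecker]
  simp only [Matrix.trace, diag_apply, mul_apply, submatrix_apply, kronecker_apply,
    transpose_apply, outer_ketpsi_apply, Gcov_apply, subSndEquiv, Equiv.coe_fn_mk,
    Equiv.neg_apply, neg_sub]
  refine Finset.sum_congr rfl fun b _ => Finset.sum_congr rfl fun c _ => ?_
  ring

end Weyl

/-- for a state `σ` on `ℂ^D`, the map
`ρ ↦ U (𝒫σᵀ𝒫 ⊗ ρ) U*`, with `U = Σ_k U_k ⊗ |φ_k⟩⟨φ_k|`, is a channel generating the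
covariant phase-space POVM `G^σ` through broadcasting from the finite position and
momentum PVMs. -/
theorem statement9 (D : ℕ) [NeZero D] (σ : Matrix (ZMod D) (ZMod D) ℂ)
    (hσ : σ.PosSemidef) (hσtr : σ.trace = 1) :
    ∃ Φ : Matrix (ZMod D) (ZMod D) ℂ →ₗ[ℂ] Matrix (ZMod D × ZMod D) (ZMod D × ZMod D) ℂ,
      (∀ ρ : Matrix (ZMod D) (ZMod D) ℂ,
        Φ ρ = (∑ k : ZMod D, shiftU D k ⊗ₖ outer (ketphi D k) (ketphi D k)) *
          ((parityP D * σ.transpose * parityP D) ⊗ₖ ρ) *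
          (∑ k : ZMod D, shiftU D k ⊗ₖ outer (ketphi D k) (ketphi D k))ᴴ) ∧
      IsChannel Φ ∧
      ∀ (ρ : Matrix (ZMod D) (ZMod D) ℂ) (m n : ZMod D),
        (Φ ρ * (outer (ketphi D m) (ketphi D m) ⊗ₖ outer (ketpsi D n) (ketpsi D n))).trace
          = (ρ * Gcov D σ m n).trace := by
  have hτ : (parityP D * σᵀ * parityP D).PosSemidef := by
    rw [parityP_mul_mul_parityP]
    exact hσ.transpose.submatrix _
  have hτtr : (parityP D * σᵀ * parityP D).trace = 1 := by
    rw [parityP_mul_mul_parityP, trace_submatrix_equiv, trace_transpose, hσtr]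
  have hU := conjTranspose_toMatrix_toPEquiv_mul_self (α := ℂ) (subSndEquiv (ZMod D))
  rw [sum_shiftU_kronecker_outer_ketphi]
  refine ⟨conjLinearMap _ ∘ₗ kroneckerBilinear (R := ℂ) _, fun ρ => rfl,
    isChannel_conjLinearMap_comp_kronecker hτ hτtr hU, fun ρ m n => ?_⟩
  simp only [LinearMap.comp_apply, conjLinearMap_apply, kroneckerBilinear,
    kroneckerMapBilinear_apply_apply]
  rw [toMatrix_toPEquiv_mul_mul_conjTranspose, parityP_mul_mul_parityP, outer_ketphi]
  exact trace_submatrix_kronecker_mul_eq_trace_mul_Gcov D σ ρ m n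
end
end

section
/- Fix D ∈ ℕ, D ≥ 1, and let σ be a state on ℂ^D. The margins of the covariant phase-space POVM G^σ are given by: Σ_{n∈ℤ_D} G^σ_{m,n} = Σ_{k∈ℤ_D} ⟨φ_{k−m}, σ φ_{k−m}⟩ |φ_k⟩⟨φ_k| = U_m σ^Q U_m^* for all m ∈ ℤ_D, and Σ_{m∈ℤ_D} G^σ_{m,n} = Σ_{k∈ℤ_D} ⟨ψ_{k−n}, σ ψ_{k−n}⟩ |ψ_k⟩⟨ψ_k| = V_n σ^P V_n^* for all n ∈ ℤ_D, where σ^Q := Σ_{m∈ℤ_D} ⟨φ_m, σφ_m⟩ |φ_m⟩⟨φ_m| and σ^P := Σ_{n∈ℤ_D} ⟨ψ_n, σψ_n⟩ |ψ_n⟩⟨ψ_n|. -/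
/-!
Up to a unimodular phase, `W_{m,n} σ W_{m,n}^* = U_m V_n σ V_n^* U_m^*`. Averaging `V_n · V_n^*`
over `n` kills the off-diagonal entries (orthogonality of the characters `⟨·,n⟩`), which gives the
position margin. The Fourier matrix `F`, with columns `ψ_k`, is unitary and intertwines the two
families, `V_n F = F U_n` and `U_m F = F V_{-m}`; so averaging `U_m · U_m^*` dephases in the
momentum basis, and conjugating by `V_n` shifts the momentum labels, which gives the other margin.
-/

open Kronecker Matrix
open scoped ComplexOrder

noncomputable section

section RankOne

variable {d e : Type}

lemma sum_smul_outer_col [Fintype e] [DecidableEq e] (M : Matrix d e ℂ) (c : e → ℂ) :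
    ∑ k, c k • outer (fun a => M a k) (fun a => M a k) = M * diagonal c * Mᴴ := by
  ext a b
  simp [outer, Matrix.sum_apply, Matrix.mul_apply, Matrix.diagonal_apply, vecMulVec_apply]
  exact Finset.sum_congr rfl fun k _ => by ring

lemma star_col_dotProduct_mulVec_col [Fintype d] (M : Matrix d e ℂ) (A : Matrix d d ℂ) (k : e) :
    star (fun a => M a k) ⬝ᵥ A *ᵥ (fun a => M a k) = (Mᴴ * A * M) k k := by
  simp only [dotProduct, mulVec, Matrix.mul_apply, Finset.mul_sum, Finset.sum_mul]
  rw [Finset.sum_comm]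
  simp [mul_assoc]

end RankOne

section

variable {D : ℕ}

lemma shiftU_conjTranspose (m : ZMod D) : (shiftU D m)ᴴ = shiftU D (-m) := by
  ext a b
  have h : b = a + m ↔ a = b + -m := by constructor <;> rintro rfl <;> abel
  simp [shiftU, h]

lemma ketphi_eq_col (k : ZMod D) :
    ketphi D k = fun a => (1 : Matrix (ZMod D) (ZMod D) ℂ) a k := by
  ext a
  simp [ketphi, one_apply]

def fourierMatrix (D : ℕ) : Matrix (ZMod D) (ZMod D) ℂ :=
  Matrix.of fun a n => ketpsi D n a

lemma fourierMatrix_apply (a n : ZMod D) : fourierMatrix D a n = chr D a n / Real.sqrt D := rfl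

end

section

variable {D : ℕ} [NeZero D]

lemma chr_eq_stdAddChar (m n : ZMod D) : chr D m n = ZMod.stdAddChar (m * n) := by
  rw [show m * n = (((m.val * n.val : ℕ) : ℤ) : ZMod D) by simp, ZMod.stdAddChar_coe, chr]
  push_cast
  ring_nf

lemma chr_comm (m n : ZMod D) : chr D m n = chr D n m := by
  rw [chr_eq_stdAddChar, chr_eq_stdAddChar, mul_comm]

lemma chr_add_left (x y n : ZMod D) : chr D (x + y) n = chr D x n * chr D y n := by
  simp only [chr_eq_stdAddChar, add_mul, AddChar.map_add_eq_mul]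

lemma chr_add_right (m x y : ZMod D) : chr D m (x + y) = chr D m x * chr D m y := by
  simp only [chr_comm m, chr_add_left]

lemma sum_chr_mul_conj (a b : ZMod D) :
    ∑ n, chr D a n * starRingEnd ℂ (chr D b n) = if a = b then (D : ℂ) else 0 := by
  have h : ∀ n, chr D a n * starRingEnd ℂ (chr D b n) = ZMod.stdAddChar (n * (a - b)) := by
    intro n
    rw [chr_eq_stdAddChar, chr_eq_stdAddChar, ← AddChar.map_neg_eq_conj,
      ← AddChar.map_add_eq_mul]
    ring_nf
  simp only [h, AddChar.sum_mulShift _ (ZMod.isPrimitive_stdAddChar D), sub_eq_zero,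
    ZMod.card]
  split_ifs <;> simp

lemma shiftU_mul_apply (A : Matrix (ZMod D) (ZMod D) ℂ) (m a b : ZMod D) :
    (shiftU D m * A) a b = A (a - m) b := by
  simp [shiftU, Matrix.mul_apply, ← sub_eq_iff_eq_add, eq_comm]

lemma mul_shiftU_apply (A : Matrix (ZMod D) (ZMod D) ℂ) (m a b : ZMod D) :
    (A * shiftU D m) a b = A a (b + m) := by
  simp [shiftU, Matrix.mul_apply]

lemma mul_shiftU_conjTranspose_apply (A : Matrix (ZMod D) (ZMod D) ℂ) (m a b : ZMod D) :
    (A * (shiftU D m)ᴴ) a b = A a (b - m) := by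
  rw [shiftU_conjTranspose, mul_shiftU_apply, sub_eq_add_neg]

lemma shiftU_mul_mul_conjTranspose_apply (A : Matrix (ZMod D) (ZMod D) ℂ) (m a b : ZMod D) :
    (shiftU D m * A * (shiftU D m)ᴴ) a b = A (a - m) (b - m) := by
  rw [mul_shiftU_conjTranspose_apply, shiftU_mul_apply]

lemma shiftU_mul_diagonal_mul_conjTranspose (c : ZMod D → ℂ) (m : ZMod D) :
    shiftU D m * diagonal c * (shiftU D m)ᴴ = diagonal fun k => c (k - m) := by
  ext a b
  simp [shiftU_mul_mul_conjTranspose_apply, diagonal_apply]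

lemma phaseV_mul_mul_conjTranspose_apply (A : Matrix (ZMod D) (ZMod D) ℂ) (n a b : ZMod D) :
    (phaseV D n * A * (phaseV D n)ᴴ) a b = chr D a n * A a b * starRingEnd ℂ (chr D b n) := by
  simp [phaseV, diagonal_conjTranspose, diagonal_mul, mul_diagonal]

lemma sum_phaseV_mul_mul_conjTranspose (A : Matrix (ZMod D) (ZMod D) ℂ) :
    ∑ n, phaseV D n * A * (phaseV D n)ᴴ = (D : ℂ) • diagonal A.diag := by
  ext a b
  have h : ∀ n, chr D a n * A a b * starRingEnd ℂ (chr D b n)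
      = A a b * (chr D a n * starRingEnd ℂ (chr D b n)) := fun n => by ring
  simp only [Matrix.sum_apply, phaseV_mul_mul_conjTranspose_apply, h, ← Finset.mul_sum,
    sum_chr_mul_conj, Matrix.smul_apply, diagonal_apply, diag_apply]
  split_ifs with hab
  · subst hab; simp [mul_comm]
  · simp

lemma weylW_mul_mul_conjTranspose_s10 (A : Matrix (ZMod D) (ZMod D) ℂ) (k l : ZMod D) :
    weylW D k l * A * (weylW D k l)ᴴ
      = shiftU D k * (phaseV D l * A * (phaseV D l)ᴴ) * (shiftU D k)ᴴ := by
  set c := Complex.exp (Real.pi * Complex.I * k.val * l.val / D)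
  have hc : c * star c = 1 := by
    have : c = Complex.exp (↑(Real.pi * k.val * l.val / D) * Complex.I) := by
      simp only [c]; push_cast; ring_nf
    rw [RCLike.star_def, Complex.mul_conj, Complex.normSq_eq_norm_sq, this,
      Complex.norm_exp_ofReal_mul_I]
    simp
  rw [weylW, conjTranspose_smul, Matrix.smul_mul, Matrix.smul_mul, Matrix.mul_smul, smul_smul, hc,
    one_smul, conjTranspose_mul]
  simp only [Matrix.mul_assoc]

lemma fourierMatrix_conjTranspose_mul_self : (fourierMatrix D)ᴴ * fourierMatrix D = 1 := by
  have hsqrt : ((Real.sqrt D : ℝ) : ℂ) * (Real.sqrt D : ℝ) = D := by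
    rw [← Complex.ofReal_mul, Real.mul_self_sqrt D.cast_nonneg, Complex.ofReal_natCast]
  ext n n'
  have h : ∀ a, starRingEnd ℂ (fourierMatrix D a n) * fourierMatrix D a n'
      = (chr D n' a * starRingEnd ℂ (chr D n a)) / D := fun a => by
    rw [fourierMatrix_apply, fourierMatrix_apply, map_div₀, Complex.conj_ofReal, ← hsqrt,
      chr_comm a, chr_comm a]
    ring
  simp only [Matrix.mul_apply, conjTranspose_apply, RCLike.star_def, h, ← Finset.sum_div,
    sum_chr_mul_conj, one_apply, eq_comm (a := n')]
  split_ifs <;> simp [NeZero.ne]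

lemma fourierMatrix_mul_conjTranspose_self : fourierMatrix D * (fourierMatrix D)ᴴ = 1 :=
  mul_eq_one_comm.mp fourierMatrix_conjTranspose_mul_self

lemma phaseV_mul_fourierMatrix (n : ZMod D) :
    phaseV D n * fourierMatrix D = fourierMatrix D * shiftU D n := by
  ext a k
  rw [mul_shiftU_apply, phaseV, diagonal_mul, fourierMatrix_apply, fourierMatrix_apply,
    chr_add_right]
  ring

lemma shiftU_mul_fourierMatrix (m : ZMod D) :
    shiftU D m * fourierMatrix D = fourierMatrix D * phaseV D (-m) := by
  ext a k
  rw [shiftU_mul_apply, phaseV, mul_diagonal, fourierMatrix_apply, fourierMatrix_apply,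
    sub_eq_add_neg, chr_add_left, chr_comm k]
  ring

lemma conjTranspose_fourierMatrix_mul_phaseV (n : ZMod D) :
    (fourierMatrix D)ᴴ * phaseV D n = shiftU D n * (fourierMatrix D)ᴴ := by
  calc (fourierMatrix D)ᴴ * phaseV D n
      = (fourierMatrix D)ᴴ * (phaseV D n * fourierMatrix D) * (fourierMatrix D)ᴴ := by
        rw [Matrix.mul_assoc, Matrix.mul_assoc, fourierMatrix_mul_conjTranspose_self,
          Matrix.mul_one]
    _ = shiftU D n * (fourierMatrix D)ᴴ := by
        rw [phaseV_mul_fourierMatrix, ← Matrix.mul_assoc, fourierMatrix_conjTranspose_mul_self,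
          Matrix.one_mul]

lemma shiftU_eq_fourierMatrix_conj (m : ZMod D) :
    shiftU D m = fourierMatrix D * phaseV D (-m) * (fourierMatrix D)ᴴ := by
  rw [← shiftU_mul_fourierMatrix, Matrix.mul_assoc, fourierMatrix_mul_conjTranspose_self,
    Matrix.mul_one]

local notation "F" => fourierMatrix D

lemma sum_smul_outer_ketphi (σ : Matrix (ZMod D) (ZMod D) ℂ) (m : ZMod D) :
    ∑ k, (star (ketphi D (k - m)) ⬝ᵥ σ *ᵥ ketphi D (k - m)) •
        outer (ketphi D k) (ketphi D k)
      = diagonal fun k => σ (k - m) (k - m) := by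
  simp only [ketphi_eq_col, star_col_dotProduct_mulVec_col, sum_smul_outer_col, conjTranspose_one,
    Matrix.one_mul, Matrix.mul_one]

lemma sum_smul_outer_ketpsi (σ : Matrix (ZMod D) (ZMod D) ℂ) (n : ZMod D) :
    ∑ k, (star (ketpsi D (k - n)) ⬝ᵥ σ *ᵥ ketpsi D (k - n)) •
        outer (ketpsi D k) (ketpsi D k)
      = F * diagonal (fun k => (Fᴴ * σ * F) (k - n) (k - n)) * Fᴴ := by
  simp only [← sum_smul_outer_col, ← star_col_dotProduct_mulVec_col]
  rfl

lemma sigmaQ_eq_diagonal (σ : Matrix (ZMod D) (ZMod D) ℂ) : sigmaQ D σ = diagonal σ.diag := by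
  have h := sum_smul_outer_ketphi σ 0
  simp only [sub_zero] at h
  exact h

lemma sigmaP_eq (σ : Matrix (ZMod D) (ZMod D) ℂ) :
    sigmaP D σ = F * diagonal (Fᴴ * σ * F).diag * Fᴴ := by
  have h := sum_smul_outer_ketpsi σ 0
  simp only [sub_zero] at h
  exact h

lemma sum_shiftU_mul_mul_conjTranspose (A : Matrix (ZMod D) (ZMod D) ℂ) :
    ∑ m, shiftU D m * A * (shiftU D m)ᴴ
      = (D : ℂ) • (F * diagonal (Fᴴ * A * F).diag * Fᴴ) := by
  have h : ∀ m, shiftU D m * A * (shiftU D m)ᴴ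
      = F * (phaseV D (-m) * (Fᴴ * A * F) * (phaseV D (-m))ᴴ) * Fᴴ := fun m => by
    simp only [shiftU_eq_fourierMatrix_conj m, conjTranspose_mul, conjTranspose_conjTranspose,
      Matrix.mul_assoc]
  have hneg : ∑ m, phaseV D (-m) * (Fᴴ * A * F) * (phaseV D (-m))ᴴ
      = ∑ n, phaseV D n * (Fᴴ * A * F) * (phaseV D n)ᴴ :=
    Fintype.sum_equiv (Equiv.neg _) _ _ fun _ => rfl
  simp only [h, ← Matrix.sum_mul, ← Matrix.mul_sum]
  rw [hneg, sum_phaseV_mul_mul_conjTranspose, Matrix.mul_smul, Matrix.smul_mul]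

lemma Gcov_eq (σ : Matrix (ZMod D) (ZMod D) ℂ) (m n : ZMod D) :
    Gcov D σ m n =
      (D : ℂ)⁻¹ • (shiftU D m * (phaseV D n * σ * (phaseV D n)ᴴ) * (shiftU D m)ᴴ) := by
  rw [Gcov, weylW_mul_mul_conjTranspose_s10]

lemma sum_Gcov_right (σ : Matrix (ZMod D) (ZMod D) ℂ) (m : ZMod D) :
    ∑ n, Gcov D σ m n = shiftU D m * diagonal σ.diag * (shiftU D m)ᴴ := by
  have hD : (D : ℂ) ≠ 0 := Nat.cast_ne_zero.mpr (NeZero.ne D)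
  simp only [Gcov_eq, ← Finset.smul_sum, ← Matrix.sum_mul, ← Matrix.mul_sum,
    sum_phaseV_mul_mul_conjTranspose, Matrix.mul_smul, Matrix.smul_mul, inv_smul_smul₀ hD]

lemma sum_Gcov_left (σ : Matrix (ZMod D) (ZMod D) ℂ) (n : ZMod D) :
    ∑ m, Gcov D σ m n = F * diagonal (fun k => (Fᴴ * σ * F) (k - n) (k - n)) * Fᴴ := by
  have hD : (D : ℂ) ≠ 0 := Nat.cast_ne_zero.mpr (NeZero.ne D)
  have hV : Fᴴ * (phaseV D n * σ * (phaseV D n)ᴴ) * F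
      = shiftU D n * (Fᴴ * σ * F) * (shiftU D n)ᴴ := by
    have h := congrArg conjTranspose (conjTranspose_fourierMatrix_mul_phaseV (D := D) n)
    simp only [conjTranspose_mul, conjTranspose_conjTranspose] at h
    simp only [← Matrix.mul_assoc, conjTranspose_fourierMatrix_mul_phaseV]
    simp only [Matrix.mul_assoc, h]
  simp only [Gcov_eq, ← Finset.smul_sum, sum_shiftU_mul_mul_conjTranspose, inv_smul_smul₀ hD,
    hV]
  congr 3
  ext k
  exact shiftU_mul_mul_conjTranspose_apply _ n k k

lemma phaseV_conj_fourierMatrix_diagonal (c : ZMod D → ℂ) (n : ZMod D) :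
    phaseV D n * (F * diagonal c * Fᴴ) * (phaseV D n)ᴴ
      = F * diagonal (fun k => c (k - n)) * Fᴴ := by
  have h := congrArg conjTranspose (phaseV_mul_fourierMatrix (D := D) n)
  simp only [conjTranspose_mul] at h
  rw [← shiftU_mul_diagonal_mul_conjTranspose]
  simp only [← Matrix.mul_assoc, phaseV_mul_fourierMatrix]
  simp only [Matrix.mul_assoc, h]

end

theorem statement10_general (D : ℕ) [NeZero D] (σ : Matrix (ZMod D) (ZMod D) ℂ) :
    (∀ m : ZMod D,
      (∑ n : ZMod D, Gcov D σ m n) =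
        (∑ k : ZMod D, (star (ketphi D (k - m)) ⬝ᵥ σ.mulVec (ketphi D (k - m))) •
          outer (ketphi D k) (ketphi D k)) ∧
      (∑ n : ZMod D, Gcov D σ m n) = shiftU D m * sigmaQ D σ * (shiftU D m)ᴴ) ∧
    (∀ n : ZMod D,
      (∑ m : ZMod D, Gcov D σ m n) =
        (∑ k : ZMod D, (star (ketpsi D (k - n)) ⬝ᵥ σ.mulVec (ketpsi D (k - n))) •
          outer (ketpsi D k) (ketpsi D k)) ∧
      (∑ m : ZMod D, Gcov D σ m n) = phaseV D n * sigmaP D σ * (phaseV D n)ᴴ) := by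
  refine ⟨fun m => ⟨?_, ?_⟩, fun n => ⟨?_, ?_⟩⟩
  · rw [sum_Gcov_right, shiftU_mul_diagonal_mul_conjTranspose, sum_smul_outer_ketphi]
    rfl
  · rw [sum_Gcov_right, sigmaQ_eq_diagonal]
  · rw [sum_Gcov_left, sum_smul_outer_ketpsi]
  · rw [sum_Gcov_left, sigmaP_eq, phaseV_conj_fourierMatrix_diagonal]
    rfl

/-- the margins of the covariant phase-space POVM `G^σ` are the shifted
position-diagonal and momentum-diagonal parts of `σ`. -/
theorem statement10 (D : ℕ) [NeZero D] (σ : Matrix (ZMod D) (ZMod D) ℂ)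
    (hσ : σ.PosSemidef) (hσtr : σ.trace = 1) :
    (∀ m : ZMod D,
      (∑ n : ZMod D, Gcov D σ m n) =
        (∑ k : ZMod D, (star (ketphi D (k - m)) ⬝ᵥ σ.mulVec (ketphi D (k - m))) •
          outer (ketphi D k) (ketphi D k)) ∧
      (∑ n : ZMod D, Gcov D σ m n) = shiftU D m * sigmaQ D σ * (shiftU D m)ᴴ) ∧
    (∀ n : ZMod D,
      (∑ m : ZMod D, Gcov D σ m n) =
        (∑ k : ZMod D, (star (ketpsi D (k - n)) ⬝ᵥ σ.mulVec (ketpsi D (k - n))) •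
          outer (ketpsi D k) (ketpsi D k)) ∧
      (∑ m : ZMod D, Gcov D σ m n) = phaseV D n * sigmaP D σ * (phaseV D n)ᴴ) :=
  statement10_general D σ
end
end

section
/- Let 𝒢 be a finite group, D, D₁, D₂ ∈ ℕ positive, and let U: 𝒢 → U(D₁), V: 𝒢 → U(D₂), W: 𝒢 → U(D) be projective unitary representations. Let 𝒢 act on finite sets X and Y, and act on X×Y diagonally by g·(x,y) = (g·x, g·y). Let (M_x)_{x∈X} be a (U,X)-covariant POVM on ℂ^{D₁}, (N_y)_{y∈Y} a (V,Y)-covariant POVM on ℂ^{D₂}, and (G_{x,y})_{(x,y)∈X×Y} a (W, X×Y)-covariant POVM on ℂ^D. If there exists a channel Ψ from D×D matrices to (D₁·D₂)×(D₁·D₂) matrices with tr[Ψ(ρ)(M_x ⊗ N_y)] = tr[ρ G_{x,y}] for all ρ, x, y, then there exists a channel Φ with the same property which is in addition (W, U⊗V)-covariant: Φ(W(g) ρ W(g)*) = (U(g) ⊗ V(g)) Φ(ρ) (U(g) ⊗ V(g))* for all g ∈ 𝒢 and all ρ. -/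
open Kronecker Matrix
open scoped ComplexOrder

noncomputable section

/-- A projective unitary representation of a group together with its multiplier. -/
def IsProjRep {G : Type} [Group G] {d : Type} [Fintype d] [DecidableEq d]
    (U : G → Matrix d d ℂ) (mult : G → G → ℂ) : Prop :=
  U 1 = 1 ∧ (∀ g, (U g)ᴴ * U g = 1 ∧ U g * (U g)ᴴ = 1) ∧
  (∀ g h, ‖mult g h‖ = 1) ∧
  (∀ g, mult 1 g = 1) ∧ (∀ g, mult g 1 = 1) ∧
  (∀ g h k, mult g h * mult (g * h) k = mult g (h * k) * mult h k) ∧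
  (∀ g h, U (g * h) = mult g h • (U g * U h))

/-! Averaging `Ψ` over the group, `Φ = |𝒢|⁻¹ ∑_g Ad(U g ⊗ V g) ∘ Ψ ∘ Ad(W g)ᴴ`, gives a convex
combination of channels, hence a channel. Each summand still reproduces `G`: covariance turns
`(U g ⊗ V g)ᴴ (M_x ⊗ N_y) (U g ⊗ V g)` into `M_{g⁻¹x} ⊗ N_{g⁻¹y}` and `W gᴴ G_{x,y} W g` into
`G_{g⁻¹x, g⁻¹y}`. Covariance of `Φ` comes from reindexing the sum by `h ↦ g h`; the multipliers
drop out because conjugation by a unitary is blind to a phase. -/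

def conjMap {m n : Type} [Fintype m] (B : Matrix n m ℂ) : Matrix m m ℂ →ₗ[ℂ] Matrix n n ℂ where
  toFun ρ := B * ρ * Bᴴ
  map_add' ρ σ := by simp only [Matrix.mul_add, Matrix.add_mul]
  map_smul' c ρ := by simp only [Matrix.mul_smul, Matrix.smul_mul, RingHom.id_apply]

@[simp]
lemma conjMap_apply {m n : Type} [Fintype m] (B : Matrix n m ℂ) (ρ : Matrix m m ℂ) :
    conjMap B ρ = B * ρ * Bᴴ := rfl

lemma trace_mul_mul_conjTranspose {m n : Type} [Fintype m] [DecidableEq m] [Fintype n]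
    {B : Matrix n m ℂ} (hB : Bᴴ * B = 1) (ρ : Matrix m m ℂ) : (B * ρ * Bᴴ).trace = ρ.trace := by
  rw [trace_mul_cycle, hB, Matrix.one_mul]

section Channels

variable {m n : Type} [Fintype m] [DecidableEq m] [Fintype n] [DecidableEq n]

lemma isCPMap_conjMap (B : Matrix n m ℂ) : IsCPMap (conjMap B) := by
  intro k A hA
  have hblock : (Matrix.of fun p q : Fin k × n =>
      conjMap B (Matrix.of fun a b => A (p.1, a) (q.1, b)) p.2 q.2)
      = ((1 : Matrix (Fin k) (Fin k) ℂ) ⊗ₖ B) * A * ((1 : Matrix (Fin k) (Fin k) ℂ) ⊗ₖ B)ᴴ := by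
    ext ⟨i, a⟩ ⟨j, b⟩
    simp [Matrix.mul_apply, Fintype.sum_prod_type, Matrix.one_apply, Finset.sum_mul,
      apply_ite (starRingEnd ℂ), ite_mul]
  rw [hblock]
  exact hA.mul_mul_conjTranspose_same _

lemma IsCPMap.comp_s13 {l : Type} [Fintype l] [DecidableEq l] {Φ₁ : Matrix l l ℂ →ₗ[ℂ] Matrix m m ℂ}
    {Φ₂ : Matrix m m ℂ →ₗ[ℂ] Matrix n n ℂ} (h₂ : IsCPMap Φ₂) (h₁ : IsCPMap Φ₁) :
    IsCPMap (Φ₂ ∘ₗ Φ₁) :=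
  fun k A hA => h₂ k _ (h₁ k A hA)

lemma IsCPMap.smul {Φ : Matrix m m ℂ →ₗ[ℂ] Matrix n n ℂ} (h : IsCPMap Φ) {c : ℂ} (hc : 0 ≤ c) :
    IsCPMap (c • Φ) :=
  fun k A hA => (h k A hA).smul hc

lemma IsCPMap.sum {ι : Type} [Fintype ι] {Φ : ι → Matrix m m ℂ →ₗ[ℂ] Matrix n n ℂ}
    (h : ∀ i, IsCPMap (Φ i)) : IsCPMap (∑ i, Φ i) := by
  intro k A hA
  have hblock : (Matrix.of fun p q : Fin k × n =>
      (∑ i, Φ i) (Matrix.of fun a b => A (p.1, a) (q.1, b)) p.2 q.2)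
      = ∑ i, Matrix.of fun p q : Fin k × n =>
          Φ i (Matrix.of fun a b => A (p.1, a) (q.1, b)) p.2 q.2 := by
    ext p q
    simp [Matrix.sum_apply]
  rw [hblock]
  exact posSemidef_sum _ fun i _ => h i k A hA

lemma isChannel_conjMap {B : Matrix n m ℂ} (hB : Bᴴ * B = 1) : IsChannel (conjMap B) :=
  ⟨isCPMap_conjMap B, trace_mul_mul_conjTranspose hB⟩

lemma IsChannel.comp_s13 {l : Type} [Fintype l] [DecidableEq l]
    {Φ₁ : Matrix l l ℂ →ₗ[ℂ] Matrix m m ℂ} {Φ₂ : Matrix m m ℂ →ₗ[ℂ] Matrix n n ℂ}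
    (h₂ : IsChannel Φ₂) (h₁ : IsChannel Φ₁) : IsChannel (Φ₂ ∘ₗ Φ₁) :=
  ⟨h₂.1.comp_s13 h₁.1, fun ρ => (h₂.2 _).trans (h₁.2 ρ)⟩

lemma inv_card_smul_sum_const {ι : Type} [Fintype ι] [Nonempty ι] (c : ℂ) :
    (Fintype.card ι : ℂ)⁻¹ • ∑ _i : ι, c = c := by
  rw [Finset.sum_const, Finset.card_univ, nsmul_eq_mul, smul_eq_mul,
    inv_mul_cancel_left₀ (Nat.cast_ne_zero.mpr Fintype.card_ne_zero)]

lemma IsChannel.inv_card_smul_sum {ι : Type} [Fintype ι] [Nonempty ι]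
    {Φ : ι → Matrix m m ℂ →ₗ[ℂ] Matrix n n ℂ} (h : ∀ i, IsChannel (Φ i)) :
    IsChannel ((Fintype.card ι : ℂ)⁻¹ • ∑ i, Φ i) := by
  refine ⟨(IsCPMap.sum fun i => (h i).1).smul ?_, fun ρ => ?_⟩
  · exact inv_nonneg.mpr (Nat.cast_nonneg _)
  · simp only [LinearMap.smul_apply, LinearMap.sum_apply, trace_smul, trace_sum, (h _).2]
    exact inv_card_smul_sum_const _

end Channels

lemma star_mul_self_of_norm_eq_one {c : ℂ} (hc : ‖c‖ = 1) : star c * c = 1 := by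
  rw [Complex.star_def, mul_comm, Complex.mul_conj, Complex.normSq_eq_norm_sq, hc]
  norm_num

lemma conj_smul_of_norm_eq_one {m n : Type} [Fintype m] {c : ℂ} (hc : ‖c‖ = 1)
    (P : Matrix n m ℂ) (A : Matrix m m ℂ) : (c • P) * A * (c • P)ᴴ = P * A * Pᴴ := by
  rw [conjTranspose_smul, Matrix.smul_mul, Matrix.smul_mul, Matrix.mul_smul, smul_smul,
    mul_comm c, star_mul_self_of_norm_eq_one hc, one_smul]

lemma conjTranspose_conj_smul_of_norm_eq_one {m n : Type} [Fintype n] {c : ℂ} (hc : ‖c‖ = 1)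
    (P : Matrix n m ℂ) (A : Matrix n n ℂ) : (c • P)ᴴ * A * (c • P) = Pᴴ * A * P := by
  rw [conjTranspose_smul, Matrix.smul_mul, Matrix.smul_mul, Matrix.mul_smul, smul_smul,
    star_mul_self_of_norm_eq_one hc, one_smul]

lemma kronecker_conj {l m n p : Type} [Fintype m] [Fintype p] (A : Matrix l m ℂ)
    (B : Matrix n p ℂ) (C : Matrix m m ℂ) (D : Matrix p p ℂ) :
    (A ⊗ₖ B) * (C ⊗ₖ D) * (A ⊗ₖ B)ᴴ = (A * C * Aᴴ) ⊗ₖ (B * D * Bᴴ) := by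
  rw [conjTranspose_kronecker, ← mul_kronecker_mul, ← mul_kronecker_mul]

namespace IsProjRep

variable {𝒢 : Type} [Group 𝒢] {d : Type} [Fintype d] [DecidableEq d]
  {U : 𝒢 → Matrix d d ℂ} {mU : 𝒢 → 𝒢 → ℂ}

lemma conjTranspose_mul_self (hU : IsProjRep U mU) (g : 𝒢) : (U g)ᴴ * U g = 1 := (hU.2.1 g).1

lemma mul_conjTranspose_self (hU : IsProjRep U mU) (g : 𝒢) : U g * (U g)ᴴ = 1 := (hU.2.1 g).2

lemma norm_mult (hU : IsProjRep U mU) (g h : 𝒢) : ‖mU g h‖ = 1 := hU.2.2.1 g h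

lemma map_mul (hU : IsProjRep U mU) (g h : 𝒢) : U (g * h) = mU g h • (U g * U h) :=
  hU.2.2.2.2.2.2 g h

lemma conj_mul (hU : IsProjRep U mU) (g h : 𝒢) (A : Matrix d d ℂ) :
    U (g * h) * A * (U (g * h))ᴴ = U g * (U h * A * (U h)ᴴ) * (U g)ᴴ := by
  rw [hU.map_mul, conj_smul_of_norm_eq_one (hU.norm_mult g h), conjTranspose_mul]
  simp only [Matrix.mul_assoc]

lemma conjTranspose_conj_mul (hU : IsProjRep U mU) (g h : 𝒢) (A : Matrix d d ℂ) :
    (U (g * h))ᴴ * A * U (g * h) = (U h)ᴴ * ((U g)ᴴ * A * U g) * U h := by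
  rw [hU.map_mul, conjTranspose_conj_smul_of_norm_eq_one (hU.norm_mult g h), conjTranspose_mul]
  simp only [Matrix.mul_assoc]

lemma conjTranspose_conj_conj (hU : IsProjRep U mU) (g : 𝒢) (A : Matrix d d ℂ) :
    (U g)ᴴ * (U g * A * (U g)ᴴ) * U g = A := by
  simp only [← Matrix.mul_assoc, hU.conjTranspose_mul_self, Matrix.one_mul]
  rw [Matrix.mul_assoc, hU.conjTranspose_mul_self, Matrix.mul_one]

lemma conj_conjTranspose_conj (hU : IsProjRep U mU) (g : 𝒢) (A : Matrix d d ℂ) :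
    U g * ((U g)ᴴ * A * U g) * (U g)ᴴ = A := by
  simp only [← Matrix.mul_assoc, hU.mul_conjTranspose_self, Matrix.one_mul]
  rw [Matrix.mul_assoc, hU.mul_conjTranspose_self, Matrix.mul_one]

lemma conj_inv (hU : IsProjRep U mU) (g : 𝒢) (A : Matrix d d ℂ) :
    U g⁻¹ * A * (U g⁻¹)ᴴ = (U g)ᴴ * A * U g := by
  conv_lhs => rw [← hU.conj_conjTranspose_conj g A]
  rw [← hU.conj_mul, inv_mul_cancel, hU.1, Matrix.one_mul, conjTranspose_one, Matrix.mul_one]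

lemma conjTranspose_conj_of_covariant {X : Type} [MulAction 𝒢 X] (hU : IsProjRep U mU)
    {M : X → Matrix d d ℂ} (hM : ∀ g x, U g * M x * (U g)ᴴ = M (g • x)) (g : 𝒢) (x : X) :
    (U g)ᴴ * M x * U g = M (g⁻¹ • x) := by
  rw [← hU.conj_inv, hM]

lemma kronecker {e : Type} [Fintype e] [DecidableEq e] (hU : IsProjRep U mU)
    {V : 𝒢 → Matrix e e ℂ} {mV : 𝒢 → 𝒢 → ℂ} (hV : IsProjRep V mV) :
    IsProjRep (fun g => U g ⊗ₖ V g) (fun g h => mU g h * mV g h) := by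
  obtain ⟨hU1, hUu, hUn, hUl, hUr, hUc, hUm⟩ := hU
  obtain ⟨hV1, hVu, hVn, hVl, hVr, hVc, hVm⟩ := hV
  refine ⟨?_, fun g => ⟨?_, ?_⟩, fun g h => ?_, fun g => ?_,
    fun g => ?_, fun g h k => ?_, fun g h => ?_⟩ <;> dsimp only
  · rw [hU1, hV1, one_kronecker_one]
  · rw [conjTranspose_kronecker, ← mul_kronecker_mul, (hUu g).1, (hVu g).1, one_kronecker_one]
  · rw [conjTranspose_kronecker, ← mul_kronecker_mul, (hUu g).2, (hVu g).2, one_kronecker_one]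
  · rw [norm_mul, hUn, hVn, one_mul]
  · rw [hUl, hVl, one_mul]
  · rw [hUr, hVr, one_mul]
  · linear_combination (mV g h * mV (g * h) k) * hUc g h k + (mU g (h * k) * mU h k) * hVc g h k
  · rw [hUm, hVm, smul_kronecker, kronecker_smul, smul_smul, mul_kronecker_mul]

end IsProjRep

lemma trace_conj_mul {m n : Type} [Fintype m] [Fintype n] (B : Matrix n m ℂ) (ρ : Matrix m m ℂ)
    (E : Matrix n n ℂ) : (B * ρ * Bᴴ * E).trace = (ρ * (Bᴴ * E * B)).trace := by
  rw [Matrix.mul_assoc, Matrix.mul_assoc, trace_mul_comm, Matrix.mul_assoc, Matrix.mul_assoc]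

lemma trace_conjTranspose_conj_mul {m n : Type} [Fintype m] [Fintype n] (B : Matrix m n ℂ)
    (ρ : Matrix m m ℂ) (E : Matrix n n ℂ) :
    (Bᴴ * ρ * B * E).trace = (ρ * (B * E * Bᴴ)).trace := by
  simpa only [conjTranspose_conjTranspose] using trace_conj_mul Bᴴ ρ E

section Twirl

variable {𝒢 : Type} [Fintype 𝒢] {m n : Type} [Fintype m] [Fintype n]
  {U : 𝒢 → Matrix n n ℂ} {W : 𝒢 → Matrix m m ℂ} {Ψ : Matrix m m ℂ →ₗ[ℂ] Matrix n n ℂ}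

variable (U W Ψ) in
def twirl : Matrix m m ℂ →ₗ[ℂ] Matrix n n ℂ :=
  (Fintype.card 𝒢 : ℂ)⁻¹ • ∑ g, conjMap (U g) ∘ₗ Ψ ∘ₗ conjMap (W g)ᴴ

lemma twirl_apply (ρ : Matrix m m ℂ) :
    twirl U W Ψ ρ = (Fintype.card 𝒢 : ℂ)⁻¹ • ∑ g, U g * Ψ ((W g)ᴴ * ρ * W g) * (U g)ᴴ := by
  simp only [twirl, LinearMap.smul_apply, LinearMap.sum_apply, LinearMap.comp_apply,
    conjMap_apply, conjTranspose_conjTranspose]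

variable [Group 𝒢] [DecidableEq n]

lemma trace_twirl_mul_of_covariant {ι : Type} [MulAction 𝒢 ι] {mU : 𝒢 → 𝒢 → ℂ}
    (hU : IsProjRep U mU) {E : ι → Matrix n n ℂ} {F : ι → Matrix m m ℂ}
    (hE : ∀ g i, U g * E i * (U g)ᴴ = E (g • i)) (hF : ∀ g i, W g * F i * (W g)ᴴ = F (g • i))
    (hΨ : ∀ ρ i, (Ψ ρ * E i).trace = (ρ * F i).trace) (ρ : Matrix m m ℂ) (i : ι) :
    (twirl U W Ψ ρ * E i).trace = (ρ * F i).trace := by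
  have hterm : ∀ g, (U g * Ψ ((W g)ᴴ * ρ * W g) * (U g)ᴴ * E i).trace = (ρ * F i).trace :=
    fun g => by
      rw [trace_conj_mul, hU.conjTranspose_conj_of_covariant hE, hΨ,
        trace_conjTranspose_conj_mul, hF, smul_inv_smul]
  rw [twirl_apply, Matrix.smul_mul, trace_smul, Finset.sum_mul, trace_sum]
  simp only [hterm]
  exact inv_card_smul_sum_const _

variable [DecidableEq m]

lemma IsChannel.twirl (hU : ∀ g, (U g)ᴴ * U g = 1) (hW : ∀ g, W g * (W g)ᴴ = 1)
    (hΨ : IsChannel Ψ) : IsChannel (twirl U W Ψ) :=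
  IsChannel.inv_card_smul_sum fun g =>
    (isChannel_conjMap (hU g)).comp_s13
      (hΨ.comp_s13 (isChannel_conjMap (by rw [conjTranspose_conjTranspose]; exact hW g)))

lemma twirl_conj {mU mW : 𝒢 → 𝒢 → ℂ} (hU : IsProjRep U mU) (hW : IsProjRep W mW) (g : 𝒢)
    (ρ : Matrix m m ℂ) : twirl U W Ψ (W g * ρ * (W g)ᴴ) = U g * twirl U W Ψ ρ * (U g)ᴴ := by
  have hterm : ∀ h, U (g * h) * Ψ ((W (g * h))ᴴ * (W g * ρ * (W g)ᴴ) * W (g * h)) * (U (g * h))ᴴ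
      = U g * (U h * Ψ ((W h)ᴴ * ρ * W h) * (U h)ᴴ) * (U g)ᴴ := fun h => by
    rw [hW.conjTranspose_conj_mul, hW.conjTranspose_conj_conj, hU.conj_mul]
  rw [twirl_apply, twirl_apply, ← Equiv.sum_comp (Equiv.mulLeft g)]
  simp only [Equiv.coe_mulLeft, hterm, Matrix.mul_smul, Matrix.smul_mul, Finset.mul_sum,
    Finset.sum_mul]

end Twirl

theorem statement13_general (𝒢 : Type) [Group 𝒢] [Fintype 𝒢]
    (D D₁ D₂ : ℕ)
    (U : 𝒢 → Matrix (Fin D₁) (Fin D₁) ℂ) (mU : 𝒢 → 𝒢 → ℂ) (hU : IsProjRep U mU)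
    (V : 𝒢 → Matrix (Fin D₂) (Fin D₂) ℂ) (mV : 𝒢 → 𝒢 → ℂ) (hV : IsProjRep V mV)
    (W : 𝒢 → Matrix (Fin D) (Fin D) ℂ) (mW : 𝒢 → 𝒢 → ℂ) (hW : IsProjRep W mW)
    (X Y : Type) [Fintype X] [Fintype Y] [MulAction 𝒢 X] [MulAction 𝒢 Y]
    (M : X → Matrix (Fin D₁) (Fin D₁) ℂ)
    (hMcov : ∀ (g : 𝒢) (x : X), U g * M x * (U g)ᴴ = M (g • x))
    (N : Y → Matrix (Fin D₂) (Fin D₂) ℂ)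
    (hNcov : ∀ (g : 𝒢) (y : Y), V g * N y * (V g)ᴴ = N (g • y))
    (G : X × Y → Matrix (Fin D) (Fin D) ℂ)
    (hGcov : ∀ (g : 𝒢) (p : X × Y), W g * G p * (W g)ᴴ = G (g • p.1, g • p.2))
    (Ψ : Matrix (Fin D) (Fin D) ℂ →ₗ[ℂ] Matrix (Fin D₁ × Fin D₂) (Fin D₁ × Fin D₂) ℂ)
    (hΨ : IsChannel Ψ)
    (hΨG : ∀ (ρ : Matrix (Fin D) (Fin D) ℂ) (x : X) (y : Y),
      (Ψ ρ * (M x ⊗ₖ N y)).trace = (ρ * G (x, y)).trace) :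
    ∃ Φ : Matrix (Fin D) (Fin D) ℂ →ₗ[ℂ] Matrix (Fin D₁ × Fin D₂) (Fin D₁ × Fin D₂) ℂ,
      IsChannel Φ ∧
      (∀ (ρ : Matrix (Fin D) (Fin D) ℂ) (x : X) (y : Y),
        (Φ ρ * (M x ⊗ₖ N y)).trace = (ρ * G (x, y)).trace) ∧
      ∀ (g : 𝒢) (ρ : Matrix (Fin D) (Fin D) ℂ),
        Φ (W g * ρ * (W g)ᴴ) = (U g ⊗ₖ V g) * Φ ρ * (U g ⊗ₖ V g)ᴴ := by
  have hUV := hU.kronecker hV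
  have hMNcov : ∀ (g : 𝒢) (p : X × Y),
      (U g ⊗ₖ V g) * (M p.1 ⊗ₖ N p.2) * (U g ⊗ₖ V g)ᴴ = M (g • p).1 ⊗ₖ N (g • p).2 :=
    fun g p => by rw [kronecker_conj, hMcov, hNcov, Prod.smul_fst, Prod.smul_snd]
  refine ⟨twirl (fun g => U g ⊗ₖ V g) W Ψ,
    hΨ.twirl hUV.conjTranspose_mul_self hW.mul_conjTranspose_self, fun ρ x y => ?_,
    twirl_conj hUV hW⟩
  exact trace_twirl_mul_of_covariant hUV (E := fun p : X × Y => M p.1 ⊗ₖ N p.2) hMNcov hGcov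
    (fun ρ p => hΨG ρ p.1 p.2) ρ (x, y)

/-- symmetrization of the broadcasting channel: if a `(W, X×Y)`-covariant
POVM `G` can be generated through broadcasting from a `(U,X)`-covariant POVM `M` and a
`(V,Y)`-covariant POVM `N`, then the broadcasting channel can be chosen
`(W, U⊗V)`-covariant. -/
theorem statement13 (𝒢 : Type) [Group 𝒢] [Fintype 𝒢]
    (D D₁ D₂ : ℕ) (hD : 0 < D) (hD₁ : 0 < D₁) (hD₂ : 0 < D₂)
    (U : 𝒢 → Matrix (Fin D₁) (Fin D₁) ℂ) (mU : 𝒢 → 𝒢 → ℂ) (hU : IsProjRep U mU)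
    (V : 𝒢 → Matrix (Fin D₂) (Fin D₂) ℂ) (mV : 𝒢 → 𝒢 → ℂ) (hV : IsProjRep V mV)
    (W : 𝒢 → Matrix (Fin D) (Fin D) ℂ) (mW : 𝒢 → 𝒢 → ℂ) (hW : IsProjRep W mW)
    (X Y : Type) [Fintype X] [Fintype Y] [MulAction 𝒢 X] [MulAction 𝒢 Y]
    (M : X → Matrix (Fin D₁) (Fin D₁) ℂ) (hM : IsPOVM M)
    (hMcov : ∀ (g : 𝒢) (x : X), U g * M x * (U g)ᴴ = M (g • x))
    (N : Y → Matrix (Fin D₂) (Fin D₂) ℂ) (hN : IsPOVM N)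
    (hNcov : ∀ (g : 𝒢) (y : Y), V g * N y * (V g)ᴴ = N (g • y))
    (G : X × Y → Matrix (Fin D) (Fin D) ℂ) (hG : IsPOVM G)
    (hGcov : ∀ (g : 𝒢) (p : X × Y), W g * G p * (W g)ᴴ = G (g • p.1, g • p.2))
    (Ψ : Matrix (Fin D) (Fin D) ℂ →ₗ[ℂ] Matrix (Fin D₁ × Fin D₂) (Fin D₁ × Fin D₂) ℂ)
    (hΨ : IsChannel Ψ)
    (hΨG : ∀ (ρ : Matrix (Fin D) (Fin D) ℂ) (x : X) (y : Y),
      (Ψ ρ * (M x ⊗ₖ N y)).trace = (ρ * G (x, y)).trace) :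
    ∃ Φ : Matrix (Fin D) (Fin D) ℂ →ₗ[ℂ] Matrix (Fin D₁ × Fin D₂) (Fin D₁ × Fin D₂) ℂ,
      IsChannel Φ ∧
      (∀ (ρ : Matrix (Fin D) (Fin D) ℂ) (x : X) (y : Y),
        (Φ ρ * (M x ⊗ₖ N y)).trace = (ρ * G (x, y)).trace) ∧
      ∀ (g : 𝒢) (ρ : Matrix (Fin D) (Fin D) ℂ),
        Φ (W g * ρ * (W g)ᴴ) = (U g ⊗ₖ V g) * Φ ρ * (U g ⊗ₖ V g)ᴴ :=
  statement13_general 𝒢 D D₁ D₂ U mU hU V mV hV W mW hW X Y M hMcov N hNcov G hGcov Ψ hΨ hΨG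
end
end

section
/- Let D ∈ ℕ, D ≥ 2, and let (φ_i)_{i∈Fin D} and (ψ_j)_{j∈Fin D} be two mutually unbiased orthonormal bases of ℂ^D, i.e. |⟨φ_i, ψ_j⟩|² = 1/D for all i, j. Set P_i := |φ_i⟩⟨φ_i|, Q_j := |ψ_j⟩⟨ψ_j|, K_i := √(√D/(2(√D+1))) · (P_i + D^{−1/2} I), and G_{i,j} := K_i Q_j K_i. Then (G_{i,j})_{(i,j)∈Fin D × Fin D} is a POVM on ℂ^D whose margins are Σ_{j} G_{i,j} = ½(1 + 1/√D) P_i + ½(1 − 1/√D) M_i and Σ_{i} G_{i,j} = ½(1 + 1/√D) Q_j + ½(1 − 1/√D) N_j, where M_i := (I − P_i)/(D−1) and N_j := (I − Q_j)/(D−1); i.e., G is an optimal approximate joint measurement of the MUB observables P and Q. -/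
open Kronecker Matrix
open scoped ComplexOrder

noncomputable section

/-!
With `c² = √D / (2(√D + 1))` and `t = 1/√D` we have `K_i = c (P_i + t)`, which is Hermitian, so
`G_{ij} = K_i Q_j K_iᴴ` is positive. As `Σ_j Q_j = 1`, the first margin is
`K_i² = c²(1 + 2t) P_i + c²t²`, since `P_i` is a projection. Unbiasedness gives
`P_i Q_j P_i = P_i / D`, so with `Σ_i P_i = 1` the second margin is `c²/D + c²(2t + Dt²) Q_j`,
the same expression in `Q_j` because `Dt² = 1`. Both coefficient pairs are those of
`½(1 + t) X + ½(1 − t)(1 − X)/(D − 1)`, and summing the first margin over `i` gives `1`.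
-/

section Outer

variable {d : Type} [Fintype d]

lemma outer_mul_outer (u v w x : d → ℂ) :
    outer u v * outer w x = (star v ⬝ᵥ w) • outer u x := by
  rw [outer, outer, outer, vecMulVec_mul_vecMulVec, vecMulVec_smul]

lemma posSemidef_outer_self [DecidableEq d] (u : d → ℂ) : (outer u u).PosSemidef :=
  posSemidef_vecMulVec_self_star u

lemma isIdempotentElem_outer_self {u : d → ℂ} (hu : star u ⬝ᵥ u = 1) :
    IsIdempotentElem (outer u u) := by
  rw [IsIdempotentElem, outer_mul_outer, hu, one_smul]

lemma outer_self_mul_outer_self_mul_outer_self (u v : d → ℂ) :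
    outer u u * outer v v * outer u u = (‖star u ⬝ᵥ v‖ ^ 2 : ℝ) • outer u u := by
  have hconj : star v ⬝ᵥ u = starRingEnd ℂ (star u ⬝ᵥ v) := by
    simp [dotProduct, map_sum, mul_comm]
  rw [outer_mul_outer, smul_mul_assoc, outer_mul_outer, smul_smul, hconj, Complex.mul_conj,
    Complex.normSq_eq_norm_sq, ← Complex.coe_smul]

lemma sum_outer_self_eq_one [DecidableEq d] {φ : d → d → ℂ}
    (hφ : ∀ i j, star (φ i) ⬝ᵥ φ j = if i = j then 1 else 0) :
    ∑ i, outer (φ i) (φ i) = 1 := by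
  set A : Matrix d d ℂ := (of φ)ᵀ
  have hAA : Aᴴ * A = 1 := by
    ext i j
    simpa [A, mul_apply, dotProduct, one_apply] using hφ i j
  have := mul_eq_one_comm.mp hAA
  ext a b
  simpa [A, mul_apply, outer, vecMulVec_apply, Matrix.sum_apply] using congrFun (congrFun this a) b

end Outer

section Lueders

variable {A : Type*} [Ring A] [Algebra ℝ A]

lemma smul_add_smul_one_mul_self {P : A} (hP : IsIdempotentElem P) (c t : ℝ) :
    c • (P + t • 1) * (c • (P + t • 1)) = (c ^ 2 * (1 + 2 * t)) • P + (c ^ 2 * t ^ 2) • 1 := by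
  simp only [add_mul, mul_add, hP.eq, smul_mul_assoc, mul_smul_comm, one_mul, mul_one, smul_smul]
  module

lemma sum_smul_add_smul_one_mul_mul {ι : Type*} [Fintype ι] {P : ι → A} (hP : ∑ i, P i = 1)
    {Q : A} {r : ℝ} (hPQP : ∀ i, P i * Q * P i = r • P i) (c t : ℝ) :
    ∑ i, c • (P i + t • 1) * Q * (c • (P i + t • 1)) =
      (c ^ 2 * r) • 1 + (c ^ 2 * (2 * t + Fintype.card ι * t ^ 2)) • Q := by
  have hexpand : ∀ i, c • (P i + t • 1) * Q * (c • (P i + t • 1)) =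
      c ^ 2 • (P i * Q * P i + t • (P i * Q) + t • (Q * P i) + t ^ 2 • Q) := fun i => by
    simp only [smul_mul_assoc, mul_smul_comm, add_mul, mul_add, smul_add, smul_smul,
      one_mul, mul_one]
    module
  simp only [hexpand, hPQP, ← Finset.smul_sum, Finset.sum_add_distrib, ← Finset.sum_mul,
    ← Finset.mul_sum, hP, one_mul, mul_one, Finset.sum_const, Finset.card_univ,
    ← Nat.cast_smul_eq_nsmul ℝ]
  module

end Lueders

section MUB

variable {A : Type*} [Ring A] [Algebra ℝ A]

def noisyMargin (D : ℕ) (X : A) : A :=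
  ((1 / 2) * (1 + (Real.sqrt D)⁻¹) : ℝ) • X +
    ((1 / 2) * (1 - (Real.sqrt D)⁻¹) : ℝ) • (((D : ℝ) - 1)⁻¹ • (1 - X))

def krausOp (D : ℕ) (P : A) : A :=
  Real.sqrt (Real.sqrt D / (2 * (Real.sqrt D + 1))) • (P + ((Real.sqrt D)⁻¹ : ℝ) • 1)

lemma noisyMargin_eq {D : ℕ} (hD : 1 < D) (X : A) :
    noisyMargin D X =
      (Real.sqrt D / (2 * (Real.sqrt D + 1)) * (1 + 2 * (Real.sqrt D)⁻¹)) • X +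
        (Real.sqrt D / (2 * (Real.sqrt D + 1)) * (Real.sqrt D)⁻¹ ^ 2) • 1 := by
  have hD' : (1 : ℝ) < D := by exact_mod_cast hD
  set s := Real.sqrt D
  have hs : s ^ 2 = D := Real.sq_sqrt (by positivity)
  have hs1 : 1 < s := by nlinarith [Real.sqrt_nonneg (D : ℝ)]
  have hsD : (D : ℝ) - 1 = (s - 1) * (s + 1) := by rw [← hs]; ring
  rw [noisyMargin, hsD]
  have : s - 1 ≠ 0 := by linarith
  match_scalars <;> field_simp <;> ring

lemma sum_noisyMargin {D : ℕ} (hD : 1 < D) {ι : Type*} [Fintype ι] (hcard : Fintype.card ι = D)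
    {P : ι → A} (hP : ∑ i, P i = 1) : ∑ i, noisyMargin D (P i) = 1 := by
  have hD' : (D : ℝ) - 1 ≠ 0 := by
    rw [sub_ne_zero]; exact_mod_cast hD.ne'
  simp only [noisyMargin, Finset.sum_add_distrib, ← Finset.smul_sum, Finset.sum_sub_distrib, hP,
    Finset.sum_const, Finset.card_univ, hcard, ← Nat.cast_smul_eq_nsmul ℝ]
  rw [show (D : ℝ) • (1 : A) - 1 = ((D : ℝ) - 1) • 1 by rw [sub_smul, one_smul],
    inv_smul_smul₀ hD', ← add_smul]
  convert one_smul ℝ (1 : A) using 2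
  ring

lemma krausOp_mul_self {D : ℕ} (hD : 1 < D) {P : A} (hP : IsIdempotentElem P) :
    krausOp D P * krausOp D P = noisyMargin D P := by
  rw [krausOp, smul_add_smul_one_mul_self hP, Real.sq_sqrt (by positivity), noisyMargin_eq hD]

lemma sum_krausOp_mul_mul {D : ℕ} (hD : 1 < D) {P : Fin D → A} (hP : ∑ i, P i = 1) {Q : A}
    (hPQP : ∀ i, P i * Q * P i = (D : ℝ)⁻¹ • P i) :
    ∑ i, krausOp D (P i) * Q * krausOp D (P i) = noisyMargin D Q := by
  have hs : (Real.sqrt D)⁻¹ ^ 2 = (D : ℝ)⁻¹ := by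
    rw [inv_pow, Real.sq_sqrt (by positivity)]
  have hD0 : (D : ℝ) ≠ 0 := by positivity
  simp only [krausOp]
  rw [sum_smul_add_smul_one_mul_mul hP hPQP, Real.sq_sqrt (by positivity), Fintype.card_fin, hs,
    mul_inv_cancel₀ hD0, noisyMargin_eq hD, hs, add_comm, add_comm (2 * _)]

lemma IsSelfAdjoint.krausOp [StarRing A] [StarModule ℝ A] {P : A} (hP : IsSelfAdjoint P)
    (D : ℕ) : IsSelfAdjoint (krausOp D P) :=
  (IsSelfAdjoint.all _).smul (hP.add ((IsSelfAdjoint.all _).smul (IsSelfAdjoint.one A)))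

end MUB

/-- for mutually unbiased bases `(φ_i)`, `(ψ_j)` of `ℂ^D`, with
`P_i = |φ_i⟩⟨φ_i|`, `Q_j = |ψ_j⟩⟨ψ_j|`, `K_i = √(√D/(2(√D+1)))(P_i + D^{−1/2} I)` and
`G_{i,j} = K_i Q_j K_i`, the family `G` is a POVM whose margins are the optimally noisy
versions of `P` and `Q`. -/
theorem statement18 (D : ℕ) (hD : 2 ≤ D)
    (φ ψ : Fin D → (Fin D → ℂ))
    (hφ : ∀ i j, star (φ i) ⬝ᵥ φ j = if i = j then 1 else 0)
    (hψ : ∀ i j, star (ψ i) ⬝ᵥ ψ j = if i = j then 1 else 0)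
    (hmub : ∀ i j, ‖star (φ i) ⬝ᵥ ψ j‖ ^ 2 = 1 / D)
    (P Q : Fin D → Matrix (Fin D) (Fin D) ℂ)
    (hP : ∀ i, P i = outer (φ i) (φ i)) (hQ : ∀ j, Q j = outer (ψ j) (ψ j))
    (K : Fin D → Matrix (Fin D) (Fin D) ℂ)
    (hK : ∀ i, K i = Real.sqrt (Real.sqrt D / (2 * (Real.sqrt D + 1))) •
      (P i + ((Real.sqrt D)⁻¹ : ℝ) • (1 : Matrix (Fin D) (Fin D) ℂ)))
    (G : Fin D → Fin D → Matrix (Fin D) (Fin D) ℂ)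
    (hG : ∀ i j, G i j = K i * Q j * K i) :
    IsPOVM (fun p : Fin D × Fin D => G p.1 p.2) ∧
    (∀ i, ∑ j, G i j =
      ((1 / 2) * (1 + (Real.sqrt D)⁻¹) : ℝ) • P i +
      ((1 / 2) * (1 - (Real.sqrt D)⁻¹) : ℝ) •
        (((D : ℝ) - 1)⁻¹ • ((1 : Matrix (Fin D) (Fin D) ℂ) - P i))) ∧
    (∀ j, ∑ i, G i j =
      ((1 / 2) * (1 + (Real.sqrt D)⁻¹) : ℝ) • Q j +
      ((1 / 2) * (1 - (Real.sqrt D)⁻¹) : ℝ) •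
        (((D : ℝ) - 1)⁻¹ • ((1 : Matrix (Fin D) (Fin D) ℂ) - Q j))) := by
  replace hK : ∀ i, K i = krausOp D (P i) := hK
  have hPsum : ∑ i, P i = 1 := by simp only [hP]; exact sum_outer_self_eq_one hφ
  have hQsum : ∑ j, Q j = 1 := by simp only [hQ]; exact sum_outer_self_eq_one hψ
  have hPQP : ∀ i j, P i * Q j * P i = (D : ℝ)⁻¹ • P i := fun i j => by
    rw [hP, hQ, outer_self_mul_outer_self_mul_outer_self, hmub, one_div]
  have margin₁ : ∀ i, ∑ j, G i j = noisyMargin D (P i) := fun i => by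
    have hidem : IsIdempotentElem (P i) := by
      rw [hP]; exact isIdempotentElem_outer_self (by simpa using hφ i i)
    simp only [hG, ← Finset.mul_sum, ← Finset.sum_mul, hQsum, mul_one, hK]
    exact krausOp_mul_self hD hidem
  have margin₂ : ∀ j, ∑ i, G i j = noisyMargin D (Q j) := fun j => by
    simp only [hG, hK]
    exact sum_krausOp_mul_mul hD hPsum (hPQP · j)
  have hpsd : ∀ i j, (G i j).PosSemidef := fun i j => by
    have hKH : (K i).IsHermitian := by
      rw [hK, hP]; exact (posSemidef_outer_self _).isHermitian.isSelfAdjoint.krausOp D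
    have := (posSemidef_outer_self (ψ j)).conjTranspose_mul_mul_same (K i)
    rwa [hKH.eq, ← hQ, ← hG] at this
  refine ⟨⟨fun p => hpsd p.1 p.2, ?_⟩, margin₁, margin₂⟩
  rw [Fintype.sum_prod_type]
  simp only [margin₁]
  exact sum_noisyMargin hD (Fintype.card_fin D) hPsum
end
end

section
/- Let d, M, N ∈ ℕ be positive, let (P_i)_{i∈Fin M} and (Q_j)_{j∈Fin N} be PVMs on ℂ^d, and define K_i := √(√M/(2(√M+1))) · (P_i + M^{−1/2} I) and G_{i,j} := K_i Q_j K_i for i ∈ Fin M and j ∈ Fin N. Then (G_{i,j}) is a POVM on ℂ^d and its margins are given by Σ_{j∈Fin N} G_{i,j} = ((√M+2)/(2(√M+1))) P_i + (√M/(2(√M+1))) (1/M) I for all i, and Σ_{i∈Fin M} G_{i,j} = ((√M+2)/(2(√M+1))) Q_j + (√M/(2(√M+1))) Σ_{i∈Fin M} P_i Q_j P_i for all j. -/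
open Kronecker Matrix
open scoped ComplexOrder

noncomputable section

/-- for PVMs `(P_i)_{i∈Fin M}` and `(Q_j)_{j∈Fin N}` on `ℂ^d`, with
`K_i = √(√M/(2(√M+1)))(P_i + M^{−1/2} I)` and `G_{i,j} = K_i Q_j K_i`, the family `G` is a
POVM with margins `Σ_j G_{i,j} = ((√M+2)/(2(√M+1))) P_i + (√M/(2(√M+1)))(1/M) I` and
`Σ_i G_{i,j} = ((√M+2)/(2(√M+1))) Q_j + (√M/(2(√M+1))) Σ_i P_i Q_j P_i`. -/
theorem statement19 (d M N : ℕ) (hd : 0 < d) (hM : 0 < M) (hN : 0 < N)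
    (P : Fin M → Matrix (Fin d) (Fin d) ℂ) (hP : IsPVM P)
    (Q : Fin N → Matrix (Fin d) (Fin d) ℂ) (hQ : IsPVM Q)
    (K : Fin M → Matrix (Fin d) (Fin d) ℂ)
    (hK : ∀ i, K i = Real.sqrt (Real.sqrt M / (2 * (Real.sqrt M + 1))) •
      (P i + ((Real.sqrt M)⁻¹ : ℝ) • (1 : Matrix (Fin d) (Fin d) ℂ)))
    (G : Fin M → Fin N → Matrix (Fin d) (Fin d) ℂ)
    (hG : ∀ i j, G i j = K i * Q j * K i) :
    IsPOVM (fun p : Fin M × Fin N => G p.1 p.2) ∧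
    (∀ i, ∑ j, G i j =
      ((Real.sqrt M + 2) / (2 * (Real.sqrt M + 1)) : ℝ) • P i +
      (Real.sqrt M / (2 * (Real.sqrt M + 1)) : ℝ) •
        (((M : ℝ))⁻¹ • (1 : Matrix (Fin d) (Fin d) ℂ))) ∧
    (∀ j, ∑ i, G i j =
      ((Real.sqrt M + 2) / (2 * (Real.sqrt M + 1)) : ℝ) • Q j +
      (Real.sqrt M / (2 * (Real.sqrt M + 1)) : ℝ) • (∑ i, P i * Q j * P i)) := by
  obtain ⟨⟨hQpos, hQsum⟩, hQproj⟩ := hQ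
  obtain ⟨⟨hPpos, hPsum⟩, hPproj⟩ := hP
  have hMR : (0:ℝ) < (M:ℝ) := by exact_mod_cast hM
  set m : ℝ := Real.sqrt M with hm
  have hm0 : 0 < m := Real.sqrt_pos.mpr hMR
  have hm1 : 0 < m + 1 := by linarith
  have hm2 : m * m = (M:ℝ) := Real.mul_self_sqrt hMR.le
  have hMm : ((M:ℝ)) = m * m := hm2.symm
  set r : ℝ := Real.sqrt (m / (2*(m+1))) with hr
  have hrr : r * r = m / (2*(m+1)) := Real.mul_self_sqrt (by positivity)
  have hKH : ∀ i, (K i)ᴴ = K i := by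
    intro i
    simp [hK, conjTranspose_smul, conjTranspose_add, (hPproj i).1]
  have hGexp : ∀ i j, G i j = (m / (2*(m+1))) •
      (P i * Q j * P i + m⁻¹ • (P i * Q j) + m⁻¹ • (Q j * P i) + (m⁻¹ * m⁻¹) • Q j) := by
    intro i j
    rw [hG, hK]
    simp only [add_mul, mul_add, smul_mul_assoc, mul_smul_comm, one_mul, mul_one,
      smul_add, smul_smul]
    have hrr' : r * r * (2 * (m + 1)) = m := by
      rw [hrr]; field_simp
    match_scalars <;> (field_simp; first
      | linear_combination hrr'
      | linear_combination m * hrr'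
      | linear_combination m ^ 2 * hrr'
      | linear_combination m ^ 3 * hrr')
  have margin1 : ∀ i, ∑ j, G i j =
      ((m + 2) / (2 * (m + 1)) : ℝ) • P i +
      (m / (2 * (m + 1)) : ℝ) • (((M : ℝ))⁻¹ • (1 : Matrix (Fin d) (Fin d) ℂ)) := by
    intro i
    have h1 : ∑ j, P i * Q j * P i = P i := by
      simp only [← Finset.sum_mul, ← Finset.mul_sum, hQsum, mul_one, (hPproj i).2]
    have h2 : ∑ j, P i * Q j = P i := by rw [← Finset.mul_sum, hQsum, mul_one]
    have h3 : ∑ j, Q j * P i = P i := by rw [← Finset.sum_mul, hQsum, one_mul]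
    calc ∑ j, G i j = (m / (2*(m+1))) •
        ((∑ j, P i * Q j * P i) + m⁻¹ • (∑ j, P i * Q j) + m⁻¹ • (∑ j, Q j * P i)
          + (m⁻¹ * m⁻¹) • (∑ j, Q j)) := by
          simp only [hGexp, ← Finset.smul_sum, Finset.sum_add_distrib]
      _ = _ := by
          rw [h1, h2, h3, hQsum, hMm]
          match_scalars <;> field_simp <;> ring
  have margin2 : ∀ j, ∑ i, G i j =
      ((m + 2) / (2 * (m + 1)) : ℝ) • Q j +
      (m / (2 * (m + 1)) : ℝ) • (∑ i, P i * Q j * P i) := by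
    intro j
    have h2 : ∑ i, P i * Q j = Q j := by rw [← Finset.sum_mul, hPsum, one_mul]
    have h3 : ∑ i, Q j * P i = Q j := by rw [← Finset.mul_sum, hPsum, mul_one]
    have h4 : ∑ _i : Fin M, (m⁻¹ * m⁻¹) • Q j = ((M:ℝ) * (m⁻¹ * m⁻¹)) • Q j := by
      rw [Finset.sum_const, Finset.card_univ, Fintype.card_fin,
        ← Nat.cast_smul_eq_nsmul ℝ, smul_smul]
    calc ∑ i, G i j = (m / (2*(m+1))) •
        ((∑ i, P i * Q j * P i) + m⁻¹ • (∑ i, P i * Q j) + m⁻¹ • (∑ i, Q j * P i)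
          + ((M:ℝ) * (m⁻¹ * m⁻¹)) • Q j) := by
          simp only [hGexp, ← Finset.smul_sum, Finset.sum_add_distrib, h4]
      _ = _ := by
          rw [h2, h3, hMm]
          match_scalars <;> field_simp <;> ring
  refine ⟨⟨?_, ?_⟩, margin1, margin2⟩
  · rintro ⟨i, j⟩
    have := (hQpos j).conjTranspose_mul_mul_same (K i)
    rw [hKH] at this
    simpa using (hG i j ▸ this)
  · rw [Fintype.sum_prod_type]
    simp only [margin1]
    rw [Finset.sum_add_distrib, ← Finset.smul_sum, hPsum, Finset.sum_const,
      Finset.card_univ, Fintype.card_fin, ← Nat.cast_smul_eq_nsmul ℝ, hMm]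
    match_scalars
    field_simp
    ring
end
end
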